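/- arXiv:2301.07872 — 7 statements merged into one kernel-verified Lean document; each statement's English description precedes it below -/
import Mathlib

section
/- Let G ≤ Aut(S) be a finite abelian subgroup of the group of graded automorphisms of the weighted polynomial ring S. Then G is diagonalizable: there exists γ ∈ Aut(S) such that every element of γGγ⁻¹ maps each variable x_i to a scalar multiple of x_i. -/
/-!
On each graded piece `S_m`, finite-dimensional because the weights are positive, the finite
abelian group `G` acts by commuting operators of finite order, so `S_m` is spanned by common
eigenvectors of `G`. Their linear parts span the linear forms in the variables of weight `m`, so
one can pick eigenvectors `y_i ∈ S_{a_i}`, one for each variable, whose linear parts form a basis.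
The substitution `x_i ↦ y_i` is then surjective, by induction on the weight: `x_i` minus a suitable
combination of the `y_j` involves only variables of smaller weight. Being surjective on each
finite-dimensional piece, it is bijective, and its inverse `γ` conjugates `G` into diagonal form.
-/

open MvPolynomial

noncomputable section

/-- The predicate that an algebra automorphism of `ℂ[x_0,…,x_{n+1}]` is graded with
respect to the weights `a`, i.e. preserves all weighted-homogeneous pieces. -/
def IsGradedAut {n : ℕ} (a : Fin (n + 2) → ℕ)
    (φ : MvPolynomial (Fin (n + 2)) ℂ ≃ₐ[ℂ] MvPolynomial (Fin (n + 2)) ℂ) : Prop :=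
  ∀ (d : ℕ) (f : MvPolynomial (Fin (n + 2)) ℂ),
    f.IsWeightedHomogeneous a d ↔ (φ f).IsWeightedHomogeneous a d

lemma IsGradedAut.one {n : ℕ} (a : Fin (n + 2) → ℕ) : IsGradedAut a 1 := by
  intro d f
  rfl

lemma IsGradedAut.mul {n : ℕ} {a : Fin (n + 2) → ℕ}
    {φ ψ : MvPolynomial (Fin (n + 2)) ℂ ≃ₐ[ℂ] MvPolynomial (Fin (n + 2)) ℂ}
    (hφ : IsGradedAut a φ) (hψ : IsGradedAut a ψ) : IsGradedAut a (φ * ψ) := by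
  intro d f
  rw [AlgEquiv.mul_apply]
  exact (hψ d f).trans (hφ d (ψ f))

lemma IsGradedAut.inv {n : ℕ} {a : Fin (n + 2) → ℕ}
    {φ : MvPolynomial (Fin (n + 2)) ℂ ≃ₐ[ℂ] MvPolynomial (Fin (n + 2)) ℂ}
    (hφ : IsGradedAut a φ) : IsGradedAut a φ⁻¹ := by
  intro d f
  have h := hφ d (φ⁻¹ f)
  rw [show φ (φ⁻¹ f) = f from φ.apply_symm_apply f] at h
  exact h.symm

/-- The group of graded automorphisms `Aut(S)`. -/
def gradedAut {n : ℕ} (a : Fin (n + 2) → ℕ) :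
    Subgroup (MvPolynomial (Fin (n + 2)) ℂ ≃ₐ[ℂ] MvPolynomial (Fin (n + 2)) ℂ) where
  carrier := {φ | IsGradedAut a φ}
  one_mem' := IsGradedAut.one a
  mul_mem' hφ hψ := hφ.mul hψ
  inv_mem' hφ := hφ.inv

theorem Module.End.span_setOf_forall_exists_smul_eq_top {ι K V : Type*} [Field K] [IsAlgClosed K]
    [CharZero K] [AddCommGroup V] [Module K V] [FiniteDimensional K V] (f : ι → End K V)
    (hcomm : Pairwise fun i j => Commute (f i) (f j)) (hord : ∀ i, IsOfFinOrder (f i)) :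
    Submodule.span K {v | ∀ i, ∃ c : K, f i v = c • v} = ⊤ := by
  have hss : ∀ i, (f i).IsSemisimple := fun i => by
    obtain ⟨N, hN, hpow⟩ := (hord i).exists_pow_eq_one
    refine End.isSemisimple_of_squarefree_aeval_eq_zero (Polynomial.separable_X_pow_sub_C (1 : K)
      (Nat.cast_ne_zero.mpr hN.ne') one_ne_zero).squarefree ?_
    simp [hpow]
  have htop := End.iSup_iInf_maxGenEigenspace_eq_top_of_iSup_maxGenEigenspace_eq_top_of_commute f
    hcomm fun i => End.iSup_maxGenEigenspace_eq_top (f i)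
  simp_rw [fun i => (hss i).isFinitelySemisimple.maxGenEigenspace_eq_eigenspace] at htop
  rw [eq_top_iff, ← htop, iSup_le_iff]
  intro χ v hv
  exact Submodule.subset_span fun i =>
    ⟨χ i, End.mem_eigenspace_iff.mp (Submodule.mem_iInf _ |>.mp hv i)⟩

theorem Module.Basis.exists_basis_forall_mem_of_span_eq_top {ι K V : Type*} [Field K]
    [AddCommGroup V] [Module K V] (b : Basis ι K V) {s : Set V}
    (hs : Submodule.span K s = ⊤) : ∃ b' : Basis ι K V, ∀ i, b' i ∈ s := by
  obtain ⟨t, hts, htspan, hind⟩ := exists_linearIndependent K s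
  let c := Basis.mk hind (by rw [Subtype.range_coe, htspan, hs])
  exact ⟨c.reindex (b.indexEquiv c).symm, fun i => by simpa [c] using hts (b.indexEquiv c i).2⟩

namespace MvPolynomial

section CommSemiring

variable {σ τ R M : Type*} [CommSemiring R]

theorem IsWeightedHomogeneous.aeval [AddCommMonoid M] {v : τ → M} {w : σ → M} {y : σ → MvPolynomial τ R}
    (hy : ∀ i, (y i).IsWeightedHomogeneous v (w i)) {f : MvPolynomial σ R} {d : M}
    (hf : f.IsWeightedHomogeneous w d) : (aeval y f).IsWeightedHomogeneous v d := by
  induction hf using IsWeightedHomogeneous.induction_on with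
  | zero => simpa using isWeightedHomogeneous_zero R v d
  | add p q _ _ hp hq => simpa using hp.add hq
  | monomial ψ r hψ =>
    rw [aeval_monomial, ← hψ, Finsupp.weight_apply, Finsupp.sum, ← zero_add (Finset.sum _ _),
      Finsupp.prod]
    exact (isWeightedHomogeneous_C v r).mul
      (IsWeightedHomogeneous.prod _ _ _ fun i _ => (hy i).pow (ψ i))

theorem weightedHomogeneousComponent_map [AddCommMonoid M] [DecidableEq M] {w : σ → M}
    (φ : MvPolynomial σ R →ₗ[R] MvPolynomial σ R)
    (hφ : ∀ d p, p.IsWeightedHomogeneous w d → (φ p).IsWeightedHomogeneous w d)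
    (d : M) (p : MvPolynomial σ R) :
    weightedHomogeneousComponent w d (φ p) = φ (weightedHomogeneousComponent w d p) := by
  induction p using MvPolynomial.induction_on' with
  | add p q hp hq => simp only [map_add, hp, hq]
  | monomial ψ r =>
    have hψ := isWeightedHomogeneous_monomial w ψ r rfl
    rw [weightedHomogeneousComponent_of_mem hψ, weightedHomogeneousComponent_of_mem (hφ _ _ hψ)]
    split_ifs <;> simp

theorem isWeightedHomogeneous_apply_iff [AddCommMonoid M] {w : σ → M}
    {φ : MvPolynomial σ R →ₗ[R] MvPolynomial σ R} (hinj : Function.Injective φ)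
    (hφ : ∀ d p, p.IsWeightedHomogeneous w d → (φ p).IsWeightedHomogeneous w d) {d : M}
    {p : MvPolynomial σ R} : (φ p).IsWeightedHomogeneous w d ↔ p.IsWeightedHomogeneous w d := by
  classical
  refine ⟨fun h => ?_, hφ d p⟩
  rw [← hinj ((weightedHomogeneousComponent_map φ hφ d p).symm.trans
    (weightedHomogeneousComponent_eq_self h))]
  exact weightedHomogeneousComponent_isWeightedHomogeneous d p

def linearCoeffs (w : σ → M) (m : M) : MvPolynomial σ R →ₗ[R] {i // w i = m} → R :=
  LinearMap.pi fun k => lcoeff R (Finsupp.single k.1 1)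

theorem linearCoeffs_X [DecidableEq σ] (w : σ → M) {m : M} (k : {i // w i = m}) :
    linearCoeffs w m (X k.1 : MvPolynomial σ R) = Pi.single k 1 := by
  ext l
  simp [linearCoeffs, coeff_X, Pi.single_apply, Finsupp.single_left_inj one_ne_zero,
    Subtype.ext_iff, eq_comm]

theorem lt_of_mem_vars_of_isWeightedHomogeneous {w : σ → ℕ} (hw : ∀ i, w i ≠ 0)
    {f : MvPolynomial σ R} {d : ℕ} (hf : f.IsWeightedHomogeneous w d)
    (hlin : ∀ l, w l = d → coeff (Finsupp.single l 1) f = 0) {l : σ} (hl : l ∈ f.vars) :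
    w l < d := by
  obtain ⟨ψ, hψ, hlψ⟩ := (mem_vars_iff_mem_support l).mp hl
  have hψl : ψ l ≠ 0 := Finsupp.mem_support_iff.mp hlψ
  rw [← hf (mem_support_iff.mp hψ), ← Finsupp.weight_sub_single_add hψl]
  rcases eq_or_ne (ψ - Finsupp.single l 1) 0 with h0 | h0
  · have hψ1 : ψ = Finsupp.single l 1 := by
      rw [← Finsupp.sub_add_single_one_cancel hψl, h0, zero_add]
    subst hψ1
    exact absurd (hlin l (by simpa [Finsupp.weight_single] using hf (mem_support_iff.mp hψ)))
      (mem_support_iff.mp hψ)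
  obtain ⟨s, hs⟩ := Finsupp.ne_iff.mp h0
  have := Finsupp.le_weight_of_ne_zero' w hs
  have := Nat.pos_of_ne_zero (hw s)
  omega

end CommSemiring

section CommRing

variable {σ R : Type*} [CommRing R] {w : σ → ℕ}

theorem subalgebra_eq_top_of_linearCoeffs (hw : ∀ i, w i ≠ 0)
    (A : Subalgebra R (MvPolynomial σ R))
    (hA : ∀ j, ∃ z ∈ A, z.IsWeightedHomogeneous w (w j) ∧
      linearCoeffs w (w j) z = linearCoeffs w (w j) (X j)) : A = ⊤ := by
  rw [eq_top_iff, ← adjoin_range_X, Algebra.adjoin_le_iff]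
  rintro _ ⟨j, rfl⟩
  induction hd : w j using Nat.strong_induction_on generalizing j with | _ d ih =>
  obtain ⟨z, hzA, hz, hzX⟩ := hA j
  have hlow : X j - z ∈ supported R {l | w l < d} := by
    refine mem_supported.mpr fun l hl => ?_
    refine lt_of_mem_vars_of_isWeightedHomogeneous hw
      (hd ▸ (isWeightedHomogeneous_X R w j).sub hz) (fun l hl => ?_) hl
    have := congrFun hzX ⟨l, hl.trans hd.symm⟩
    simp only [linearCoeffs, LinearMap.pi_apply, lcoeff_apply] at this
    rw [coeff_sub, this, sub_self]
  have hsupp : supported R {l | w l < d} ≤ A := by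
    rw [supported_eq_adjoin_X, Algebra.adjoin_le_iff]
    rintro _ ⟨l, hl, rfl⟩
    exact ih _ hl l rfl
  simpa using add_mem (hsupp hlow) hzA

theorem aeval_surjective_of_span_linearCoeffs (hw : ∀ i, w i ≠ 0)
    (Y : ∀ m, {i // w i = m} → MvPolynomial σ R) (hY : ∀ m k, (Y m k).IsWeightedHomogeneous w m)
    (hspan : ∀ m, Submodule.span R (Set.range (linearCoeffs w m ∘ Y m)) = ⊤) :
    Function.Surjective (aeval (R := R) fun i => Y (w i) ⟨i, rfl⟩) := by
  let φ : MvPolynomial σ R →ₐ[R] MvPolynomial σ R := aeval fun i => Y (w i) ⟨i, rfl⟩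
  have hYφ : ∀ m k, Y m k ∈ φ.range := by
    rintro m ⟨i, rfl⟩
    exact ⟨X i, aeval_X _ i⟩
  refine (AlgHom.range_eq_top φ).mp <| subalgebra_eq_top_of_linearCoeffs hw _ fun j => ?_
  obtain ⟨z, hz, hzX⟩ : linearCoeffs w (w j) (X j) ∈
      (Submodule.span R (Set.range (Y (w j)))).map (linearCoeffs w (w j)) := by
    rw [Submodule.map_span, ← Set.range_comp, hspan (w j)]
    trivial
  refine ⟨z, ?_, ?_, hzX⟩
  · exact (Submodule.span_le (p := Subalgebra.toSubmodule φ.range)).mpr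
      (Set.range_subset_iff.mpr (hYφ _)) hz
  · exact (Submodule.span_le (p := weightedHomogeneousSubmodule R w (w j))).mpr
      (Set.range_subset_iff.mpr (hY _)) hz

end CommRing

section Field

variable {σ K M : Type*} [Field K]

theorem injective_of_surjective_of_isWeightedHomogeneous [AddCommMonoid M] [DecidableEq M]
    {w : σ → M} [∀ d, FiniteDimensional K (weightedHomogeneousSubmodule K w d)]
    (φ : MvPolynomial σ K →ₗ[K] MvPolynomial σ K)
    (hφ : ∀ d p, p.IsWeightedHomogeneous w d → (φ p).IsWeightedHomogeneous w d)
    (hsurj : Function.Surjective φ) : Function.Injective φ := by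
  have hpiece : ∀ d, Function.Injective (φ.restrict (p := weightedHomogeneousSubmodule K w d)
      (q := weightedHomogeneousSubmodule K w d) (hφ d)) := fun d => by
    refine LinearMap.injective_iff_surjective.mpr fun f => ?_
    obtain ⟨p, hp⟩ := hsurj f
    refine ⟨⟨_, weightedHomogeneousComponent_mem w p d⟩, Subtype.ext ?_⟩
    exact (weightedHomogeneousComponent_map φ hφ d p).symm.trans
      (by rw [hp, weightedHomogeneousComponent_eq_self f.2])
  refine (injective_iff_map_eq_zero φ).mpr fun p hp => ?_
  have hcomp : ∀ d, weightedHomogeneousComponent w d p = 0 := fun d => by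
    have := (injective_iff_map_eq_zero _).mp (hpiece d)
      ⟨_, weightedHomogeneousComponent_mem w p d⟩ <| Subtype.ext <|
        (weightedHomogeneousComponent_map φ hφ d p).symm.trans (by rw [hp, map_zero]; rfl)
    exact congrArg Subtype.val this
  ext ψ
  simpa [coeff_weightedHomogeneousComponent] using congrArg (coeff ψ) (hcomp (Finsupp.weight w ψ))

variable {w : σ → ℕ}

theorem finiteDimensional_weightedHomogeneousSubmodule [Finite σ] (hw : ∀ i, w i ≠ 0) (m : ℕ) :
    FiniteDimensional K (weightedHomogeneousSubmodule K w m) :=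
  Module.Finite.iff_fg.mpr (weightedHomogeneousSubmodule_fg K w hw m)

def weightedHomogeneousRep (G : Subgroup (MvPolynomial σ K ≃ₐ[K] MvPolynomial σ K))
    (hG : ∀ g ∈ G, ∀ d p, p.IsWeightedHomogeneous w d → (g p).IsWeightedHomogeneous w d)
    (m : ℕ) : G →* Module.End K (weightedHomogeneousSubmodule K w m) where
  toFun g := g.1.toLinearMap.restrict (p := weightedHomogeneousSubmodule K w m)
    (q := weightedHomogeneousSubmodule K w m) (hG g g.2 m)
  map_one' := rfl
  map_mul' _ _ := rfl

theorem exists_eigenvectors_span_linearCoeffs_eq_top [IsAlgClosed K] [CharZero K] [Finite σ]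
    (hw : ∀ i, w i ≠ 0) (G : Subgroup (MvPolynomial σ K ≃ₐ[K] MvPolynomial σ K)) [Finite G]
    (hG : ∀ g ∈ G, ∀ d p, p.IsWeightedHomogeneous w d → (g p).IsWeightedHomogeneous w d)
    (hab : ∀ g ∈ G, ∀ h ∈ G, g * h = h * g) (m : ℕ) :
    ∃ Y : {i // w i = m} → MvPolynomial σ K, (∀ k, (Y k).IsWeightedHomogeneous w m) ∧
      (∀ k, ∀ g ∈ G, ∃ c : K, g (Y k) = c • Y k) ∧
      Submodule.span K (Set.range (linearCoeffs w m ∘ Y)) = ⊤ := by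
  classical
  have := finiteDimensional_weightedHomogeneousSubmodule (K := K) hw m
  let ρ := weightedHomogeneousRep G hG m
  have hE := Module.End.span_setOf_forall_exists_smul_eq_top (fun g => ρ g)
    (fun g h _ => (show Commute g h from Subtype.ext (hab g g.2 h h.2)).map ρ)
    (fun g => ρ.isOfFinOrder (isOfFinOrder_of_finite g))
  let ℓ := linearCoeffs w m ∘ₗ (weightedHomogeneousSubmodule K w m).subtype
  have hℓ : LinearMap.range ℓ = ⊤ := by
    rw [eq_top_iff, ← (Pi.basisFun K _).span_eq, Submodule.span_le]
    rintro _ ⟨⟨i, rfl⟩, rfl⟩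
    exact ⟨⟨X i, isWeightedHomogeneous_X K w i⟩, by
      rw [Pi.basisFun_apply]; exact linearCoeffs_X w ⟨i, rfl⟩⟩
  obtain ⟨b, hb⟩ := (Pi.basisFun K _).exists_basis_forall_mem_of_span_eq_top
    (s := ℓ '' {v | ∀ g, ∃ c : K, ρ g v = c • v})
    (by rw [Submodule.span_image, hE, Submodule.map_top, hℓ])
  choose v hv hvb using hb
  refine ⟨fun k => v k, fun k => (v k).2, fun k g hg => ?_, ?_⟩
  · obtain ⟨c, hc⟩ := hv k ⟨g, hg⟩
    exact ⟨c, congrArg Subtype.val hc⟩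
  · rw [show linearCoeffs w m ∘ (fun k => (v k : MvPolynomial σ K)) = b from _root_.funext hvb,
      b.span_eq]

end Field

end MvPolynomial

/-- A finite abelian group of graded automorphisms of the weighted
polynomial ring is diagonalizable: after conjugating by a graded automorphism `γ`,
every element sends each variable `x_i` to a scalar multiple of itself. -/
theorem finite_abelian_diagonalizable {n : ℕ} (a : Fin (n + 2) → ℕ) (ha : ∀ i, 0 < a i)
    (G : Subgroup (MvPolynomial (Fin (n + 2)) ℂ ≃ₐ[ℂ] MvPolynomial (Fin (n + 2)) ℂ))
    (hG : ∀ g ∈ G, IsGradedAut a g) (hfin : Finite G)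
    (hab : ∀ g ∈ G, ∀ h ∈ G, g * h = h * g) :
    ∃ γ : MvPolynomial (Fin (n + 2)) ℂ ≃ₐ[ℂ] MvPolynomial (Fin (n + 2)) ℂ,
      IsGradedAut a γ ∧
      ∀ g ∈ G, ∀ i : Fin (n + 2), ∃ c : ℂ, (γ * g * γ⁻¹) (X i) = c • X i := by
  have hw : ∀ i, a i ≠ 0 := fun i => (ha i).ne'
  have := finiteDimensional_weightedHomogeneousSubmodule (K := ℂ) hw
  choose Y hYhom hYeig hYspan using
    exists_eigenvectors_span_linearCoeffs_eq_top hw G (fun g hg d p => (hG g hg d p).mp) hab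
  let φ : MvPolynomial (Fin (n + 2)) ℂ →ₐ[ℂ] MvPolynomial (Fin (n + 2)) ℂ :=
    aeval fun i => Y (a i) ⟨i, rfl⟩
  have hφ : ∀ d p, p.IsWeightedHomogeneous a d → (φ p).IsWeightedHomogeneous a d :=
    fun _ _ => IsWeightedHomogeneous.aeval fun i => hYhom _ _
  have hsurj := aeval_surjective_of_span_linearCoeffs hw Y hYhom hYspan
  have hinj := injective_of_surjective_of_isWeightedHomogeneous φ.toLinearMap hφ hsurj
  let ψ := AlgEquiv.ofBijective φ ⟨hinj, hsurj⟩
  have hψ : IsGradedAut a ψ := fun _ _ => (isWeightedHomogeneous_apply_iff hinj hφ).symm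
  refine ⟨ψ⁻¹, hψ.inv, fun g hg i => ?_⟩
  obtain ⟨c, hc⟩ := hYeig (a i) ⟨i, rfl⟩ g hg
  have hψX : ψ (X i) = Y (a i) ⟨i, rfl⟩ := aeval_X _ i
  refine ⟨c, ?_⟩
  calc (ψ⁻¹ * g * ψ⁻¹⁻¹) (X i) = ψ.symm (g (ψ (X i))) := rfl
    _ = c • X i := by rw [hψX, hc, map_smul, ← hψX, ψ.symm_apply_apply]

end
end

section
/- Assume gcd(a_0,…,a_{n+1}) = 1 and let f ∈ S be nonzero weighted-homogeneous of degree d. Set H := {φ ∈ Aut(S) : φ(f) = f} and G_f := {φ ∈ Aut(S) : φ(f) = c·f for some c ∈ ℂ^×}, with Δ ≤ G_f the subgroup of automorphisms x_i ↦ t^{a_i}x_i, t ∈ ℂ^×. Then the natural homomorphism H → G_f/Δ is surjective and its kernel is the cyclic group of order d consisting of the automorphisms x_i ↦ t^{a_i} x_i with t^d = 1. In particular, if G_f/Δ is finite then |H| = d·|G_f/Δ|. -/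
open MvPolynomial

noncomputable section

/-- The group `G_f` of graded automorphisms mapping `f` to a nonzero scalar multiple of itself. -/
def linGroup {n : ℕ} (a : Fin (n + 2) → ℕ) (f : MvPolynomial (Fin (n + 2)) ℂ) :
    Subgroup (MvPolynomial (Fin (n + 2)) ℂ ≃ₐ[ℂ] MvPolynomial (Fin (n + 2)) ℂ) where
  carrier := {φ | IsGradedAut a φ ∧ ∃ c : ℂˣ, φ f = (c : ℂ) • f}
  one_mem' := ⟨IsGradedAut.one a, 1, by simp⟩
  mul_mem' := by
    rintro φ ψ ⟨hφ, c₁, hc₁⟩ ⟨hψ, c₂, hc₂⟩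
    refine ⟨hφ.mul hψ, c₁ * c₂, ?_⟩
    rw [AlgEquiv.mul_apply, hc₂, map_smul, hc₁, smul_smul, Units.val_mul, mul_comm]
  inv_mem' := by
    rintro φ ⟨hφ, c, hc⟩
    refine ⟨hφ.inv, c⁻¹, ?_⟩
    rw [show φ⁻¹ f = φ.symm f from rfl, AlgEquiv.symm_apply_eq, map_smul, hc, smul_smul]
    simp

/-- The subgroup `Δ` of diagonal scalar automorphisms `x_i ↦ t^{a_i} x_i`. -/
def diagSubgroup {n : ℕ} (a : Fin (n + 2) → ℕ) :
    Subgroup (MvPolynomial (Fin (n + 2)) ℂ ≃ₐ[ℂ] MvPolynomial (Fin (n + 2)) ℂ) where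
  carrier := {φ | ∃ t : ℂˣ, ∀ i, φ (X i) = ((t : ℂ) ^ (a i)) • X i}
  one_mem' := ⟨1, fun i => by simp⟩
  mul_mem' := by
    rintro φ ψ ⟨t, ht⟩ ⟨s, hs⟩
    refine ⟨t * s, fun i => ?_⟩
    rw [AlgEquiv.mul_apply, hs i, map_smul, ht i, smul_smul, Units.val_mul, mul_pow, mul_comm]
  inv_mem' := by
    rintro φ ⟨t, ht⟩
    refine ⟨t⁻¹, fun i => ?_⟩
    have key : φ (((t⁻¹ : ℂˣ) : ℂ) ^ (a i) • X i) = X i := by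
      rw [map_smul, ht i, smul_smul, ← mul_pow]
      norm_num
    rw [show φ⁻¹ (X i) = φ.symm (X i) from rfl, AlgEquiv.symm_apply_eq]
    exact key.symm

/-- The group `H` of graded automorphisms fixing the polynomial `f`. -/
def fixGroup {n : ℕ} (a : Fin (n + 2) → ℕ) (f : MvPolynomial (Fin (n + 2)) ℂ) :
    Subgroup (MvPolynomial (Fin (n + 2)) ℂ ≃ₐ[ℂ] MvPolynomial (Fin (n + 2)) ℂ) where
  carrier := {φ | IsGradedAut a φ ∧ φ f = f}
  one_mem' := ⟨IsGradedAut.one a, by rw [AlgEquiv.one_apply]⟩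
  mul_mem' := by
    rintro φ ψ ⟨hφ, h1⟩ ⟨hψ, h2⟩
    exact ⟨hφ.mul hψ, by rw [AlgEquiv.mul_apply, h2, h1]⟩
  inv_mem' := by
    rintro φ ⟨hφ, h1⟩
    refine ⟨hφ.inv, ?_⟩
    rw [show φ⁻¹ f = φ.symm f from rfl, AlgEquiv.symm_apply_eq, h1]

/-!
The scaling `δ_t : x_i ↦ t ^ a_i • x_i` multiplies every weighted-homogeneous polynomial of
degree `e` by `t ^ e`; in particular it commutes with every graded automorphism, so `Δ` is
normal in `G_f`. If `ψ f = c • f`, a `d`-th root `t` of `c` gives `ψ δ_t⁻¹ ∈ H`, so `H → G_f/Δ`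
is onto. Its kernel `H ∩ Δ` consists of the `δ_t` with `t ^ d = 1`, and `t ↦ δ_t` is injective
because `gcd(a_i) = 1`, so the kernel is the group of `d`-th roots of unity.
-/

namespace MvPolynomial

variable {σ R : Type*} [CommSemiring R]

theorem algEquiv_ext {φ ψ : MvPolynomial σ R ≃ₐ[R] MvPolynomial σ R}
    (h : ∀ i, φ (X i) = ψ (X i)) : φ = ψ :=
  AlgEquiv.coe_toAlgHom_injective (algHom_ext h)

theorem IsWeightedHomogeneous.smul {w : σ → ℕ} {m : ℕ} {p : MvPolynomial σ R}
    (hp : p.IsWeightedHomogeneous w m) (c : R) : (c • p).IsWeightedHomogeneous w m := by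
  simpa only [smul_eq_C_mul] using hp.C_mul c

def scaleHom (w : σ → ℕ) : R →* (MvPolynomial σ R →ₐ[R] MvPolynomial σ R) where
  toFun t := aeval fun i => t ^ w i • X i
  map_one' := by ext i; simp
  map_mul' s t := by ext i; simp [mul_pow, smul_smul, mul_comm]

def scaleAut (w : σ → ℕ) : Rˣ →* (MvPolynomial σ R ≃ₐ[R] MvPolynomial σ R) :=
  (AlgEquiv.algHomUnitsEquiv R _).toMonoidHom.comp (Units.map (scaleHom w))

theorem scaleAut_apply_X (w : σ → ℕ) (t : Rˣ) (i : σ) :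
    scaleAut w t (X i) = (t : R) ^ w i • X i := by
  simp [scaleAut, scaleHom]

theorem IsWeightedHomogeneous.map_eq_pow_smul {w : σ → ℕ} {F : Type*}
    [FunLike F (MvPolynomial σ R) (MvPolynomial σ R)] [AlgHomClass F R _ _] {φ : F} {t : R}
    (hφ : ∀ i, φ (X i) = t ^ w i • X i) {m : ℕ} {p : MvPolynomial σ R}
    (hp : p.IsWeightedHomogeneous w m) : φ p = t ^ m • p := by
  induction hp using IsWeightedHomogeneous.induction_on with
  | zero => simp
  | add p q _ _ hp hq => rw [map_add, hp, hq, smul_add]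
  | monomial d r hr =>
    subst hr
    rw [monomial_eq, map_mul, Finsupp.prod, map_prod]
    simp only [map_pow, hφ, smul_pow, Finset.prod_smul, ← pow_mul, Finset.prod_pow_eq_pow_sum,
      Finsupp.weight_apply, Finsupp.sum, smul_eq_mul, mul_smul_comm, mul_comm (w _)]
    rw [← algebraMap_eq, AlgHomClass.commutes]

theorem scaleAut_injective [Fintype σ] {w : σ → ℕ}
    (hw : Finset.univ.gcd w = 1) : Function.Injective (scaleAut (R := R) w) := by
  refine (injective_iff_map_eq_one _).mpr fun t ht => ?_
  have hpow (i : σ) : t ^ w i = 1 := by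
    have hX := congrArg (fun φ => coeff (Finsupp.single i 1) (φ (X i))) ht
    simp only [scaleAut_apply_X, coeff_smul, smul_eq_mul] at hX
    exact Units.ext (by simpa using hX)
  have : orderOf t ∣ Finset.univ.gcd w :=
    Finset.dvd_gcd fun i _ => orderOf_dvd_of_pow_eq_one (hpow i)
  rwa [hw, Nat.dvd_one, orderOf_eq_one_iff] at this

end MvPolynomial

theorem Subgroup.card_eq_card_inf_mul_card_quotient {G : Type*} [Group G] {H K L : Subgroup G}
    [(K.subgroupOf L).Normal] (hHL : H ≤ L) (hL : ∀ g ∈ L, ∃ h ∈ H, ∃ k ∈ K, g = h * k) :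
    Nat.card H = Nat.card ↥(H ⊓ K) * Nat.card (L ⧸ K.subgroupOf L) := by
  let π : H →* L ⧸ K.subgroupOf L := (QuotientGroup.mk' _).comp (Subgroup.inclusion hHL)
  have hπ : Function.Surjective π := by
    rintro ⟨g⟩
    obtain ⟨h, hh, k, hk, hg⟩ := hL g g.2
    refine ⟨⟨h, hh⟩, QuotientGroup.eq.mpr ?_⟩
    simpa [Subgroup.mem_subgroupOf, hg] using hk
  have hker : π.ker = K.subgroupOf H := by
    ext x
    simp [π, QuotientGroup.eq_one_iff, Subgroup.mem_subgroupOf]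
  rw [Subgroup.card_eq_card_quotient_mul_card_subgroup π.ker, mul_comm,
    Nat.card_congr (QuotientGroup.quotientKerEquivOfSurjective π hπ).toEquiv, hker,
    ← Subgroup.inf_subgroupOf_left,
    Nat.card_congr (Subgroup.subgroupOfEquivOfLe inf_le_left).toEquiv]

variable {n : ℕ} {a : Fin (n + 2) → ℕ} {f : MvPolynomial (Fin (n + 2)) ℂ} {d : ℕ}

local notation "S" => MvPolynomial (Fin (n + 2)) ℂ

theorem diagSubgroup_eq_range : diagSubgroup a = (scaleAut a).range := by
  ext φ
  constructor
  · rintro ⟨t, ht⟩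
    exact ⟨t, algEquiv_ext fun i => by rw [scaleAut_apply_X, ht]⟩
  · rintro ⟨t, rfl⟩
    exact ⟨t, scaleAut_apply_X a t⟩

theorem isGradedAut_scaleAut (t : ℂˣ) : IsGradedAut a (scaleAut a t) := by
  intro e p
  refine ⟨fun hp => ?_, fun hp => ?_⟩
  · rw [hp.map_eq_pow_smul (scaleAut_apply_X a t)]
    exact hp.smul _
  · have hp' := hp.map_eq_pow_smul (scaleAut_apply_X a t⁻¹)
    rw [map_inv, AlgEquiv.aut_inv, AlgEquiv.symm_apply_apply] at hp'
    rw [hp']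
    exact hp.smul _

theorem IsGradedAut.commute_scaleAut {g : S ≃ₐ[ℂ] S} (hg : IsGradedAut a g) (t : ℂˣ) :
    Commute g (scaleAut a t) := by
  refine algEquiv_ext fun i => ?_
  have hgX : (g (X i)).IsWeightedHomogeneous a (a i) :=
    (hg _ _).mp (isWeightedHomogeneous_X ℂ a i)
  rw [AlgEquiv.mul_apply, AlgEquiv.mul_apply, scaleAut_apply_X, map_smul,
    hgX.map_eq_pow_smul (scaleAut_apply_X a t)]

instance diagSubgroup_subgroupOf_linGroup_normal :
    ((diagSubgroup a).subgroupOf (linGroup a f)).Normal := by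
  refine ⟨fun x hx g => ?_⟩
  rw [Subgroup.mem_subgroupOf, diagSubgroup_eq_range] at hx ⊢
  obtain ⟨t, ht⟩ := hx
  refine ⟨t, ?_⟩
  rw [Subgroup.coe_mul, Subgroup.coe_mul, Subgroup.coe_inv, ← ht,
    (g.2.1.commute_scaleAut t).mul_inv_cancel]

theorem fixGroup_le_linGroup : fixGroup a f ≤ linGroup a f :=
  fun _ ⟨hg, hfix⟩ => ⟨hg, 1, by simp [hfix]⟩

theorem scaleAut_mem_fixGroup_iff (hf0 : f ≠ 0) (hfh : f.IsWeightedHomogeneous a d) (t : ℂˣ) :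
    scaleAut a t ∈ fixGroup a f ↔ (t : ℂ) ^ d = 1 := by
  have hscale : scaleAut a t f = (t : ℂ) ^ d • f := hfh.map_eq_pow_smul (scaleAut_apply_X a t)
  change IsGradedAut a _ ∧ _ = f ↔ _
  rw [hscale, and_iff_right (isGradedAut_scaleAut t)]
  exact ⟨fun h => smul_left_injective ℂ hf0 (h.trans (one_smul ℂ f).symm),
    fun h => by rw [h, one_smul]⟩

theorem fixGroup_inf_diagSubgroup_eq_map (hf0 : f ≠ 0) (hfh : f.IsWeightedHomogeneous a d) :
    fixGroup a f ⊓ diagSubgroup a = (rootsOfUnity d ℂ).map (scaleAut a) := by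
  ext φ
  rw [Subgroup.mem_inf, diagSubgroup_eq_range]
  constructor
  · rintro ⟨hφ, t, rfl⟩
    exact ⟨t, (mem_rootsOfUnity' d t).mpr ((scaleAut_mem_fixGroup_iff hf0 hfh t).mp hφ), rfl⟩
  · rintro ⟨t, ht, rfl⟩
    exact ⟨(scaleAut_mem_fixGroup_iff hf0 hfh t).mpr ((mem_rootsOfUnity' d t).mp ht), t, rfl⟩

def fixGroupInfDiagSubgroupEquivRootsOfUnity (hgcd : Finset.univ.gcd a = 1) (hf0 : f ≠ 0)
    (hfh : f.IsWeightedHomogeneous a d) :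
    ↥(fixGroup a f ⊓ diagSubgroup a) ≃* rootsOfUnity d ℂ :=
  (MulEquiv.subgroupCongr (fixGroup_inf_diagSubgroup_eq_map hf0 hfh)).trans
    (Subgroup.equivMapOfInjective _ _ (scaleAut_injective hgcd)).symm

theorem exists_mem_fixGroup_mul_mem_diagSubgroup (hd : 0 < d)
    (hfh : f.IsWeightedHomogeneous a d) {ψ : S ≃ₐ[ℂ] S} (hψ : ψ ∈ linGroup a f) :
    ∃ φ ∈ fixGroup a f, ∃ δ ∈ diagSubgroup a, ψ = φ * δ := by
  obtain ⟨hψ, c, hc⟩ := hψ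
  obtain ⟨z, hz⟩ := IsAlgClosed.exists_pow_nat_eq (c : ℂ) hd
  let t := Units.mk0 z (ne_zero_pow hd.ne' (hz ▸ c.ne_zero))
  refine ⟨ψ * (scaleAut a t)⁻¹, ⟨hψ.mul (isGradedAut_scaleAut t).inv, ?_⟩,
    scaleAut a t, ⟨t, scaleAut_apply_X a t⟩, by group⟩
  rw [AlgEquiv.mul_apply, ← map_inv, hfh.map_eq_pow_smul (scaleAut_apply_X a t⁻¹), map_smul, hc,
    smul_smul, Units.val_inv_eq_inv_val, inv_pow, Units.val_mk0, hz, inv_mul_cancel₀ c.ne_zero,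
    one_smul]

end

theorem fix_group_covers_lin_general {n : ℕ} (a : Fin (n + 2) → ℕ)
    (hgcd : Finset.univ.gcd a = 1) (d : ℕ) (hd : 0 < d)
    (f : MvPolynomial (Fin (n + 2)) ℂ) (hf0 : f ≠ 0) (hfh : f.IsWeightedHomogeneous a d) :
    (∀ ψ ∈ linGroup a f, ∃ φ ∈ fixGroup a f, ∃ δ ∈ diagSubgroup a, ψ = φ * δ) ∧
    (∀ φ ∈ fixGroup a f, (φ ∈ diagSubgroup a ↔
        ∃ t : ℂˣ, (t : ℂ) ^ d = 1 ∧ ∀ i, φ (X i) = ((t : ℂ) ^ (a i)) • X i)) ∧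
    IsCyclic ↥(fixGroup a f ⊓ diagSubgroup a) ∧
    Nat.card ↥(fixGroup a f ⊓ diagSubgroup a) = d ∧
    (Finite (linGroup a f ⧸ (diagSubgroup a).subgroupOf (linGroup a f)) →
      Nat.card (fixGroup a f) =
        d * Nat.card (linGroup a f ⧸ (diagSubgroup a).subgroupOf (linGroup a f))) := by
  have : NeZero d := ⟨hd.ne'⟩
  have hcover (ψ) (hψ : ψ ∈ linGroup a f) := exists_mem_fixGroup_mul_mem_diagSubgroup hd hfh hψ
  let e := fixGroupInfDiagSubgroupEquivRootsOfUnity hgcd hf0 hfh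
  have hcard : Nat.card ↥(fixGroup a f ⊓ diagSubgroup a) = d := by
    rw [Nat.card_congr e.toEquiv, Complex.card_rootsOfUnity]
  refine ⟨hcover, fun φ hφ => ⟨fun hΔ => ?_, fun ⟨t, _, ht⟩ => ⟨t, ht⟩⟩,
    e.isCyclic.mpr inferInstance, hcard, fun _ => ?_⟩
  · obtain ⟨t, ht, rfl⟩ : φ ∈ (rootsOfUnity d ℂ).map (scaleAut a) :=
      fixGroup_inf_diagSubgroup_eq_map hf0 hfh ▸ ⟨hφ, hΔ⟩
    exact ⟨t, (mem_rootsOfUnity' d t).mp ht, scaleAut_apply_X a t⟩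
  · rw [Subgroup.card_eq_card_inf_mul_card_quotient fixGroup_le_linGroup hcover, hcard]

/-- Suppose `gcd(a_0,…,a_{n+1}) = 1` and `f` is nonzero weighted-homogeneous
of degree `d > 0`. Let `H = {φ ∈ Aut(S) : φ(f) = f}`. Then the natural map `H → G_f/Δ` is
surjective (every element of `G_f` is, modulo `Δ`, an element of `H`), its kernel `H ∩ Δ` is
the cyclic group of order `d` consisting of the automorphisms `x_i ↦ t^{a_i}x_i` with
`t^d = 1`; in particular `|H| = d·|G_f/Δ|` when `G_f/Δ` is finite. -/
theorem fix_group_covers_lin {n : ℕ} (a : Fin (n + 2) → ℕ) (ha : ∀ i, 0 < a i)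
    (hgcd : Finset.univ.gcd a = 1) (d : ℕ) (hd : 0 < d)
    (f : MvPolynomial (Fin (n + 2)) ℂ) (hf0 : f ≠ 0) (hfh : f.IsWeightedHomogeneous a d) :
    (∀ ψ ∈ linGroup a f, ∃ φ ∈ fixGroup a f, ∃ δ ∈ diagSubgroup a, ψ = φ * δ) ∧
    (∀ φ ∈ fixGroup a f, (φ ∈ diagSubgroup a ↔
        ∃ t : ℂˣ, (t : ℂ) ^ d = 1 ∧ ∀ i, φ (X i) = ((t : ℂ) ^ (a i)) • X i)) ∧
    IsCyclic ↥(fixGroup a f ⊓ diagSubgroup a) ∧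
    Nat.card ↥(fixGroup a f ⊓ diagSubgroup a) = d ∧
    (Finite (linGroup a f ⧸ (diagSubgroup a).subgroupOf (linGroup a f)) →
      Nat.card (fixGroup a f) =
        d * Nat.card (linGroup a f ⧸ (diagSubgroup a).subgroupOf (linGroup a f))) :=
  fix_group_covers_lin_general a hgcd d hd f hf0 hfh
end

section
/- Let G ≤ Aut(S) be a finite subgroup of the group of graded automorphisms of the weighted polynomial ring S. Then there exists γ ∈ Aut(S) such that every element of γGγ⁻¹ does not mix variables of different weights: for every weight b and every variable x_i with a_i = b, each element of γGγ⁻¹ sends x_i into the linear span of the variables x_j with a_j = b. -/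
open MvPolynomial

noncomputable section

/-!
Write `𝔪` for the ideal of the variables and `ℓ = homogeneousComponent 1` for the linear part.
Averaging `g ∘ ℓ ∘ g⁻¹` over `G` gives a linear map `P` that commutes with `G` and kills `𝔪²`.
The polynomials `c i = P (X i)` are weighted homogeneous of weight `a i` and congruent to `X i`
modulo `𝔪²`, so `Γ = aeval c` induces the identity on the associated graded ring of the `𝔪`-adic
filtration; hence `Γ` is injective, and, the weighted pieces being finite dimensional, a graded
automorphism. As `g (c i) = P (g (X i)) = P (ℓ (g (X i)))`, the conjugate `Γ⁻¹ g Γ` sends `X i` to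
`ℓ (g (X i))`, which only involves variables of weight `a i`.
-/

namespace MvPolynomial

section IdealOfVars

variable {σ R : Type*} [CommRing R]

local notation "𝔪" => idealOfVars σ R

theorem X_mem_idealOfVars (i : σ) : (X i : MvPolynomial σ R) ∈ 𝔪 :=
  Ideal.subset_span ⟨i, rfl⟩

theorem eq_zero_of_forall_mem_pow_idealOfVars {p : MvPolynomial σ R} (h : ∀ k, p ∈ 𝔪 ^ k) :
    p = 0 := by
  ext x
  rw [coeff_zero]
  by_cases hx : x.degree < p.totalDegree + 1
  · exact (mem_pow_idealOfVars_iff' _ p).mp (h _) x hx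
  · exact coeff_eq_zero_of_totalDegree_lt (by rw [← Finsupp.degree_apply]; omega)

theorem mem_idealOfVars_of_isWeightedHomogeneous {w : σ → ℕ} {d : ℕ} (hd : d ≠ 0)
    {p : MvPolynomial σ R} (hp : p.IsWeightedHomogeneous w d) : p ∈ 𝔪 := by
  rw [← pow_one 𝔪, mem_pow_idealOfVars_iff']
  intro x hx
  rw [(Finsupp.degree_eq_zero_iff x).mp (by omega)]
  by_contra h
  exact hd ((hp h).symm.trans (map_zero _))

theorem map_mem_pow_idealOfVars {F : Type*} [FunLike F (MvPolynomial σ R) (MvPolynomial σ R)]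
    [AlgHomClass F R (MvPolynomial σ R) (MvPolynomial σ R)] (φ : F) (hφ : ∀ i, φ (X i) ∈ 𝔪)
    {k : ℕ} {p : MvPolynomial σ R} (hp : p ∈ 𝔪 ^ k) : φ p ∈ 𝔪 ^ k := by
  have hmap : Ideal.map φ 𝔪 ≤ 𝔪 := by
    rw [Ideal.map_span, Ideal.span_le]
    rintro _ ⟨_, ⟨i, rfl⟩, rfl⟩
    exact hφ i
  exact Ideal.pow_right_mono hmap k (Ideal.map_pow φ 𝔪 k ▸ Ideal.mem_map_of_mem φ hp)

theorem map_mem_idealOfVars {F : Type*} [FunLike F (MvPolynomial σ R) (MvPolynomial σ R)]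
    [AlgHomClass F R (MvPolynomial σ R) (MvPolynomial σ R)] (φ : F) (hφ : ∀ i, φ (X i) ∈ 𝔪)
    {p : MvPolynomial σ R} (hp : p ∈ 𝔪) : φ p ∈ 𝔪 := by
  simpa using map_mem_pow_idealOfVars φ hφ (k := 1) (by simpa using hp)

section Shift

variable {φ : MvPolynomial σ R →ₐ[R] MvPolynomial σ R}

theorem map_mul_sub_mul_mem_pow_idealOfVars {p q : MvPolynomial σ R} {s t : ℕ}
    (hp : p ∈ 𝔪 ^ s) (hp' : φ p - p ∈ 𝔪 ^ (s + 1))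
    (hq : q ∈ 𝔪 ^ t) (hq' : φ q - q ∈ 𝔪 ^ (t + 1)) :
    φ (p * q) - p * q ∈ 𝔪 ^ (s + t + 1) := by
  have hφq : φ q ∈ 𝔪 ^ t := by
    simpa using add_mem (Ideal.pow_le_pow_right t.le_succ hq') hq
  rw [show φ (p * q) - p * q = (φ p - p) * φ q + p * (φ q - q) by rw [map_mul]; ring]
  refine add_mem ?_ ?_
  · rw [show s + t + 1 = s + 1 + t by ring, pow_add]
    exact Ideal.mul_mem_mul hp' hφq
  · rw [add_assoc, pow_add]
    exact Ideal.mul_mem_mul hp hq'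

theorem map_X_pow_sub_mem_pow_idealOfVars (hφ : ∀ i, φ (X i) - X i ∈ 𝔪 ^ 2) (i : σ) (k : ℕ) :
    φ (X i ^ k) - X i ^ k ∈ 𝔪 ^ (k + 1) := by
  induction k with
  | zero => simp
  | succ k ih =>
    rw [pow_succ]
    exact map_mul_sub_mul_mem_pow_idealOfVars (Ideal.pow_mem_pow (X_mem_idealOfVars i) k)
      ih (by simpa using X_mem_idealOfVars i) (hφ i)

theorem map_monomial_sub_mem_pow_idealOfVars (hφ : ∀ i, φ (X i) - X i ∈ 𝔪 ^ 2)
    (x : σ →₀ ℕ) (r : R) :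
    φ (monomial x r) - monomial x r ∈ 𝔪 ^ (x.degree + 1) := by
  induction x using Finsupp.induction generalizing r with
  | zero => simp [monomial_zero', algHom_C]
  | single_add i k f _ _ ih =>
    rw [monomial_single_add, map_add, Finsupp.degree_single]
    refine map_mul_sub_mul_mem_pow_idealOfVars (Ideal.pow_mem_pow (X_mem_idealOfVars i) k)
      (map_X_pow_sub_mem_pow_idealOfVars hφ i k) ?_ (ih r)
    exact (mem_pow_idealOfVars_iff _ _).mpr fun y hy => by
      rw [Finset.mem_singleton.mp (support_monomial_subset hy)]

theorem map_sub_mem_pow_succ_idealOfVars (hφ : ∀ i, φ (X i) - X i ∈ 𝔪 ^ 2) {k : ℕ}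
    {p : MvPolynomial σ R} (hp : p ∈ 𝔪 ^ k) :
    φ p - p ∈ 𝔪 ^ (k + 1) := by
  rw [show φ p - p = ∑ x ∈ p.support, (φ (monomial x (coeff x p)) - monomial x (coeff x p)) by
    rw [Finset.sum_sub_distrib, ← map_sum, ← p.as_sum]]
  refine Ideal.sum_mem _ fun x hx => Ideal.pow_le_pow_right ?_
    (map_monomial_sub_mem_pow_idealOfVars hφ x _)
  exact Nat.succ_le_succ ((mem_pow_idealOfVars_iff k p).mp hp x hx)

theorem injective_of_map_X_sub_X_mem (hφ : ∀ i, φ (X i) - X i ∈ 𝔪 ^ 2) :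
    Function.Injective φ := by
  refine (injective_iff_map_eq_zero φ).mpr fun p hp =>
    eq_zero_of_forall_mem_pow_idealOfVars fun k => ?_
  induction k with
  | zero => simp
  | succ k ih => simpa [hp] using map_sub_mem_pow_succ_idealOfVars hφ ih

end Shift

theorem homogeneousComponent_one_mem_idealOfVars (p : MvPolynomial σ R) :
    homogeneousComponent 1 p ∈ 𝔪 := by
  rw [← pow_one 𝔪, mem_pow_idealOfVars_iff']
  intro x hx
  rw [coeff_homogeneousComponent, if_neg (by omega)]

theorem homogeneousComponent_one_eq_zero_of_mem {p : MvPolynomial σ R} (hp : p ∈ 𝔪 ^ 2) :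
    homogeneousComponent 1 p = 0 := by
  ext x
  rw [coeff_homogeneousComponent, coeff_zero]
  split_ifs with hx
  · exact (mem_pow_idealOfVars_iff' 2 p).mp hp x (by omega)
  · rfl

theorem mem_pow_two_of_homogeneousComponent_one_eq_zero {p : MvPolynomial σ R} (hp : p ∈ 𝔪)
    (h : homogeneousComponent 1 p = 0) : p ∈ 𝔪 ^ 2 := by
  rw [mem_pow_idealOfVars_iff']
  intro x hx
  rcases Nat.lt_succ_iff_lt_or_eq.mp hx with hx | hx
  · exact (mem_pow_idealOfVars_iff' 1 p).mp (by rwa [pow_one]) x hx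
  · simpa [coeff_homogeneousComponent, hx] using congr_arg (coeff x) h

theorem sub_homogeneousComponent_one_mem {p : MvPolynomial σ R} (hp : p ∈ 𝔪) :
    p - homogeneousComponent 1 p ∈ 𝔪 ^ 2 := by
  refine mem_pow_two_of_homogeneousComponent_one_eq_zero
    (sub_mem hp (homogeneousComponent_one_mem_idealOfVars p)) ?_
  rw [map_sub, homogeneousComponent_eq_self (homogeneousComponent_isHomogeneous 1 p), sub_self]

theorem homogeneousComponent_one_map_homogeneousComponent_one {F : Type*}
    [FunLike F (MvPolynomial σ R) (MvPolynomial σ R)]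
    [AlgHomClass F R (MvPolynomial σ R) (MvPolynomial σ R)] (φ : F) (hφ : ∀ i, φ (X i) ∈ 𝔪)
    {p : MvPolynomial σ R} (hp : p ∈ 𝔪) :
    homogeneousComponent 1 (φ (homogeneousComponent 1 p)) = homogeneousComponent 1 (φ p) := by
  rw [← sub_eq_zero, ← map_sub, ← map_sub]
  exact homogeneousComponent_one_eq_zero_of_mem
    (map_mem_pow_idealOfVars φ hφ (by simpa using neg_mem (sub_homogeneousComponent_one_mem hp)))

variable {w : σ → ℕ} {d : ℕ}

theorem span_X_le_weightedHomogeneousSubmodule :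
    Submodule.span R (X '' {j | w j = d}) ≤ weightedHomogeneousSubmodule R w d := by
  rw [Submodule.span_le]
  rintro _ ⟨j, hj, rfl⟩
  exact hj ▸ isWeightedHomogeneous_X R w j

theorem homogeneousComponent_one_mem_span_X {p : MvPolynomial σ R}
    (hp : p.IsWeightedHomogeneous w d) :
    homogeneousComponent 1 p ∈ Submodule.span R (X '' {j | w j = d}) := by
  rw [homogeneousComponent_apply]
  refine Submodule.sum_mem _ fun x hx => ?_
  obtain ⟨hx, hdeg⟩ := Finset.mem_filter.mp hx
  obtain ⟨j, rfl⟩ : x ∈ Set.range (Finsupp.single · 1) := Finsupp.range_single_one.symm ▸ hdeg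
  have hj : w j = d := by simpa [Finsupp.weight_single] using hp (mem_support_iff.mp hx)
  rw [show monomial (Finsupp.single j 1) (coeff _ p) = coeff (Finsupp.single j 1) p • X j by
    rw [X, smul_monomial, smul_eq_mul, mul_one]]
  exact Submodule.smul_mem _ _ (Submodule.subset_span ⟨j, hj, rfl⟩)

end IdealOfVars

section WeightedSubstitution

variable {σ R : Type*} [CommRing R] {w : σ → ℕ} {c : σ → MvPolynomial σ R}

theorem aeval_mapsTo_weightedHomogeneousSubmodule
    (hc : ∀ i, c i ∈ weightedHomogeneousSubmodule R w (w i)) (d : ℕ) :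
    Set.MapsTo (aeval (R := R) c) (weightedHomogeneousSubmodule R w d : Set (MvPolynomial σ R))
      (weightedHomogeneousSubmodule R w d) := by
  intro p hp
  rw [SetLike.mem_coe, mem_weightedHomogeneousSubmodule] at hp ⊢
  induction hp using IsWeightedHomogeneous.induction_on with
  | zero => simpa using isWeightedHomogeneous_zero R w d
  | add p q _ _ hp hq => simpa using hp.add hq
  | monomial x r hx =>
    rw [aeval_monomial, algebraMap_eq, Finsupp.prod, ← hx, Finsupp.weight_apply, Finsupp.sum]
    exact IsWeightedHomogeneous.C_mul (IsWeightedHomogeneous.prod _ _ _ fun i _ => (hc i).pow _) r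

theorem injective_aeval_of_sub_X_mem (hc' : ∀ i, c i - X i ∈ idealOfVars σ R ^ 2) :
    Function.Injective (aeval (R := R) c) :=
  injective_of_map_X_sub_X_mem (by simpa using hc')

end WeightedSubstitution

section FiniteWeightedPieces

variable {σ K : Type*} [Finite σ] [Field K] {w : σ → ℕ} {c : σ → MvPolynomial σ K}
  (hw : ∀ i, w i ≠ 0) (hc : ∀ i, c i ∈ weightedHomogeneousSubmodule K w (w i))
  (hc' : ∀ i, c i - X i ∈ idealOfVars σ K ^ 2)

include hw hc hc' in
theorem aeval_surjOn_weightedHomogeneousSubmodule (d : ℕ) :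
    Set.SurjOn (aeval (R := K) c) (weightedHomogeneousSubmodule K w d : Set (MvPolynomial σ K))
      (weightedHomogeneousSubmodule K w d) := by
  have := Module.Finite.iff_fg.mpr (weightedHomogeneousSubmodule_fg K w hw d)
  let φd := (aeval c).toLinearMap.restrict (aeval_mapsTo_weightedHomogeneousSubmodule hc d)
  have hφd : Function.Surjective φd := LinearMap.injective_iff_surjective.mp fun p q h =>
    Subtype.ext (injective_aeval_of_sub_X_mem hc' (congr_arg Subtype.val h))
  intro p hp
  obtain ⟨q, hq⟩ := hφd ⟨p, hp⟩
  exact ⟨q, q.2, congr_arg Subtype.val hq⟩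

include hw hc hc' in
theorem aeval_mem_weightedHomogeneousSubmodule_iff {d : ℕ} {p : MvPolynomial σ K} :
    aeval c p ∈ weightedHomogeneousSubmodule K w d ↔ p ∈ weightedHomogeneousSubmodule K w d := by
  refine ⟨fun h => ?_, fun h => aeval_mapsTo_weightedHomogeneousSubmodule hc d h⟩
  obtain ⟨q, hq, hqp⟩ := aeval_surjOn_weightedHomogeneousSubmodule hw hc hc' d h
  rwa [← injective_aeval_of_sub_X_mem hc' hqp]

include hw hc hc' in
theorem bijective_aeval_of_sub_X_mem : Function.Bijective (aeval (R := K) c) := by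
  refine ⟨injective_aeval_of_sub_X_mem hc', ?_⟩
  rw [← AlgHom.range_eq_top, eq_top_iff, ← adjoin_range_X, Algebra.adjoin_le_iff]
  rintro _ ⟨i, rfl⟩
  obtain ⟨q, -, hq⟩ :=
    aeval_surjOn_weightedHomogeneousSubmodule hw hc hc' (w i) (isWeightedHomogeneous_X K w i)
  exact ⟨q, hq⟩

end FiniteWeightedPieces

section Averaging

variable {σ K : Type*} [Field K] (G : Subgroup (MvPolynomial σ K ≃ₐ[K] MvPolynomial σ K))
  [Fintype G]

def averageLinearPart : MvPolynomial σ K →ₗ[K] MvPolynomial σ K :=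
  (Fintype.card G : K)⁻¹ • ∑ g : G,
    (g : MvPolynomial σ K ≃ₐ[K] MvPolynomial σ K).toLinearMap ∘ₗ homogeneousComponent 1 ∘ₗ
      ((g⁻¹ : G) : MvPolynomial σ K ≃ₐ[K] MvPolynomial σ K).toLinearMap

variable {G}

theorem averageLinearPart_apply (p : MvPolynomial σ K) :
    averageLinearPart G p =
      (Fintype.card G : K)⁻¹ • ∑ g : G, g.1 (homogeneousComponent 1 ((g⁻¹ : G).1 p)) := by
  simp [averageLinearPart]

theorem averageLinearPart_map {g : MvPolynomial σ K ≃ₐ[K] MvPolynomial σ K} (hg : g ∈ G)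
    (p : MvPolynomial σ K) : averageLinearPart G (g p) = g (averageLinearPart G p) := by
  simp only [averageLinearPart_apply, map_smul, map_sum]
  congr 1
  refine Fintype.sum_equiv (Equiv.mulLeft ⟨g, hg⟩⁻¹) _ _ fun h => ?_
  simp

theorem averageLinearPart_mem_weightedHomogeneousSubmodule {w : σ → ℕ} {d : ℕ}
    (hG : ∀ g ∈ G, Set.MapsTo g (weightedHomogeneousSubmodule K w d)
      (weightedHomogeneousSubmodule K w d))
    {p : MvPolynomial σ K} (hp : p ∈ weightedHomogeneousSubmodule K w d) :
    averageLinearPart G p ∈ weightedHomogeneousSubmodule K w d := by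
  rw [averageLinearPart_apply]
  refine Submodule.smul_mem _ _ (Submodule.sum_mem _ fun g _ => hG g g.2 ?_)
  exact span_X_le_weightedHomogeneousSubmodule
    (homogeneousComponent_one_mem_span_X (hG _ (g⁻¹).2 hp))

theorem symm_averageLinearPart_homogeneousComponent_one
    {Γ : MvPolynomial σ K ≃ₐ[K] MvPolynomial σ K} (hΓ : ∀ j, Γ (X j) = averageLinearPart G (X j))
    (p : MvPolynomial σ K) :
    Γ.symm (averageLinearPart G (homogeneousComponent 1 p)) = homogeneousComponent 1 p := by
  have hp : homogeneousComponent 1 p ∈ Submodule.span K (Set.range X) :=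
    homogeneousSubmodule_one_eq_span_X (σ := σ) (R := K) ▸ homogeneousComponent_mem 1 p
  rw [← LinearMap.eqOn_span (f := Γ.toLinearMap) (by rintro _ ⟨j, rfl⟩; exact hΓ j) hp]
  exact Γ.symm_apply_apply _

variable (hG : ∀ g ∈ G, ∀ i, g (X i) ∈ idealOfVars σ K)
include hG

theorem averageLinearPart_eq_zero_of_mem {p : MvPolynomial σ K} (hp : p ∈ idealOfVars σ K ^ 2) :
    averageLinearPart G p = 0 := by
  rw [averageLinearPart_apply, Finset.sum_eq_zero, smul_zero]
  intro g _
  rw [homogeneousComponent_one_eq_zero_of_mem (map_mem_pow_idealOfVars _ (hG _ (g⁻¹).2) hp),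
    map_zero]

theorem averageLinearPart_sub_homogeneousComponent_one_mem [CharZero K] {p : MvPolynomial σ K}
    (hp : p ∈ idealOfVars σ K) :
    averageLinearPart G p - homogeneousComponent 1 p ∈ idealOfVars σ K ^ 2 := by
  refine mem_pow_two_of_homogeneousComponent_one_eq_zero
    (sub_mem ?_ (homogeneousComponent_one_mem_idealOfVars p)) ?_
  · rw [averageLinearPart_apply]
    exact Submodule.smul_of_tower_mem _ _ (Ideal.sum_mem _ fun g _ =>
      map_mem_idealOfVars g.1 (hG _ g.2) (homogeneousComponent_one_mem_idealOfVars _))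
  · have hg : ∀ g : G, homogeneousComponent 1 (g.1 (homogeneousComponent 1 ((g⁻¹ : G).1 p))) =
        homogeneousComponent 1 p := fun g => by
      rw [homogeneousComponent_one_map_homogeneousComponent_one _ (hG _ g.2)
        (map_mem_idealOfVars _ (hG _ (g⁻¹).2) hp)]
      simp
    rw [map_sub, averageLinearPart_apply, map_smul, map_sum, Finset.sum_congr rfl fun g _ => hg g,
      Finset.sum_const, Finset.card_univ, ← Nat.cast_smul_eq_nsmul K, smul_smul,
      inv_mul_cancel₀ (by simp), one_smul,
      homogeneousComponent_eq_self (homogeneousComponent_isHomogeneous 1 p), sub_self]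

theorem averageLinearPart_X_sub_X_mem [CharZero K] (i : σ) :
    averageLinearPart G (X i) - X i ∈ idealOfVars σ K ^ 2 := by
  simpa [homogeneousComponent_eq_self (isHomogeneous_X K i)] using
    averageLinearPart_sub_homogeneousComponent_one_mem hG (X_mem_idealOfVars i)

theorem symm_apply_apply_X_eq_homogeneousComponent_one
    {Γ : MvPolynomial σ K ≃ₐ[K] MvPolynomial σ K} (hΓ : ∀ j, Γ (X j) = averageLinearPart G (X j))
    {g : MvPolynomial σ K ≃ₐ[K] MvPolynomial σ K} (hg : g ∈ G) (i : σ) :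
    Γ.symm (g (Γ (X i))) = homogeneousComponent 1 (g (X i)) := by
  have hlin : averageLinearPart G (g (X i)) =
      averageLinearPart G (homogeneousComponent 1 (g (X i))) := by
    rw [← sub_eq_zero, ← map_sub]
    exact averageLinearPart_eq_zero_of_mem hG (sub_homogeneousComponent_one_mem (hG g hg i))
  rw [hΓ, ← averageLinearPart_map hg, hlin, symm_averageLinearPart_homogeneousComponent_one hΓ]

end Averaging

end MvPolynomial

/-- Any finite group of graded automorphisms can be conjugated (by a graded
automorphism) so as not to mix variables of different weights: each variable `x_i` is sent
into the linear span of the variables `x_j` with `a j = a i`. -/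
theorem finite_group_no_mixing {n : ℕ} (a : Fin (n + 2) → ℕ) (ha : ∀ i, 0 < a i)
    (G : Subgroup (MvPolynomial (Fin (n + 2)) ℂ ≃ₐ[ℂ] MvPolynomial (Fin (n + 2)) ℂ))
    (hG : ∀ g ∈ G, IsGradedAut a g) (hfin : Finite G) :
    ∃ γ : MvPolynomial (Fin (n + 2)) ℂ ≃ₐ[ℂ] MvPolynomial (Fin (n + 2)) ℂ,
      IsGradedAut a γ ∧
      ∀ g ∈ G, ∀ i : Fin (n + 2),
        (γ * g * γ⁻¹) (X i) ∈
          Submodule.span ℂ ((fun j : Fin (n + 2) => (X j : MvPolynomial (Fin (n + 2)) ℂ)) ''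
            {j | a j = a i}) := by
  have := Fintype.ofFinite G
  have hw : ∀ i, a i ≠ 0 := fun i => (ha i).ne'
  have hGw : ∀ g ∈ G, ∀ d, Set.MapsTo g (weightedHomogeneousSubmodule ℂ a d)
      (weightedHomogeneousSubmodule ℂ a d) := fun g hg d p => (hG g hg d p).mp
  have hGX : ∀ g ∈ G, ∀ i, g (X i) ∈ idealOfVars (Fin (n + 2)) ℂ := fun g hg i =>
    mem_idealOfVars_of_isWeightedHomogeneous (hw i) (hGw g hg _ (isWeightedHomogeneous_X ℂ a i))
  set c := fun i => averageLinearPart G (X i)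
  have hc : ∀ i, c i ∈ weightedHomogeneousSubmodule ℂ a (a i) := fun i =>
    averageLinearPart_mem_weightedHomogeneousSubmodule (hGw · · _) (isWeightedHomogeneous_X ℂ a i)
  have hc' : ∀ i, c i - X i ∈ idealOfVars (Fin (n + 2)) ℂ ^ 2 :=
    averageLinearPart_X_sub_X_mem hGX
  let Γ := AlgEquiv.ofBijective _ (bijective_aeval_of_sub_X_mem hw hc hc')
  have hΓ : ∀ j, Γ (X j) = c j := aeval_X c
  refine ⟨Γ⁻¹, IsGradedAut.inv fun d p =>
    (aeval_mem_weightedHomogeneousSubmodule_iff hw hc hc').symm, fun g hg i => ?_⟩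
  rw [inv_inv, AlgEquiv.mul_apply, AlgEquiv.mul_apply]
  exact symm_apply_apply_X_eq_homogeneousComponent_one hGX hΓ hg i ▸
    homogeneousComponent_one_mem_span_X (hGw g hg _ (isWeightedHomogeneous_X ℂ a i))

end
end

section
/- Suppose the weights a_0,…,a_{n+1} are pairwise distinct. Then every finite subgroup of Aut(S), the group of graded automorphisms of the weighted polynomial ring S, is abelian. -/
/-!
Write `φ (X i) = c_i(φ) X i + r_i`. When the weights are positive and pairwise distinct, `r_i`
only involves variables of weight `< a i`, and a graded `φ` maps such polynomials to such
polynomials, so `φ ↦ (c_i(φ))_i` is multiplicative. Its kernel meets the elements of finite order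
trivially: by induction on the weight, if `φ` fixes the lighter variables then it fixes `r_i`, so
`φ ^ k (X i) = X i + k • r_i`, and `φ ^ N = 1` forces `r_i = 0`. A finite group of graded
automorphisms therefore embeds into the commutative monoid `σ → ℂ`.
-/

open MvPolynomial

noncomputable section

theorem AlgEquiv.eq_zero_of_apply_eq_add_of_isOfFinOrder {R A : Type*} [CommSemiring R]
    [Ring A] [Algebra R A] [IsAddTorsionFree A] {g : A ≃ₐ[R] A} (hg : IsOfFinOrder g) {x r : A}
    (hx : g x = x + r) (hr : g r = r) : r = 0 := by
  have hpow (k : ℕ) : (g ^ k) x = x + k • r := by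
    induction k with
    | zero => rw [pow_zero, AlgEquiv.one_apply, zero_smul, add_zero]
    | succ k ih =>
      rw [pow_succ', AlgEquiv.mul_apply, ih, map_add, map_nsmul, hx, hr, succ_nsmul]
      abel
  obtain ⟨N, hN, hgN⟩ := isOfFinOrder_iff_pow_eq_one.1 hg
  have hNr : N • r = 0 := by
    simpa only [hgN, AlgEquiv.one_apply, left_eq_add] using hpow N
  exact (nsmul_eq_zero_iff.1 hNr).resolve_right hN.ne'

namespace Finsupp

variable {σ : Type*} {a : σ → ℕ}

theorem eq_single_one_of_weight_eq (ha : ∀ j, 0 < a j) {m : σ →₀ ℕ} {i : σ}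
    (hm : weight a m = a i) (hmi : m i ≠ 0) : m = single i 1 := by
  have hrest : weight a (m - single i 1) = 0 := by
    have := weight_sub_single_add (w := a) hmi
    omega
  have : m - single i 1 = 0 := by
    ext j
    by_contra hj
    have := le_weight_of_ne_zero' a hj
    have := ha j
    omega
  rw [← sub_add_single_one_cancel hmi, this, zero_add]

theorem weight_lt_of_weight_eq (ha : ∀ j, 0 < a j) (hdist : Function.Injective a)
    {m : σ →₀ ℕ} {i j : σ} (hm : weight a m = a i) (hne : m ≠ single i 1) (hj : m j ≠ 0) :
    a j < a i := by
  have hji : j ≠ i := by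
    rintro rfl
    exact hne (eq_single_one_of_weight_eq ha hm hj)
  exact (hm ▸ le_weight_of_ne_zero' a hj).lt_of_ne (hdist.ne hji)

end Finsupp

namespace MvPolynomial

variable {σ R : Type*} [CommRing R] {a : σ → ℕ}

theorem IsWeightedHomogeneous.mem_supported {p : MvPolynomial σ R} {d : ℕ}
    (hp : p.IsWeightedHomogeneous a d) : p ∈ supported R {j | a j ≤ d} := by
  rw [MvPolynomial.mem_supported]
  intro j hj
  obtain ⟨m, hm, hjm⟩ := (mem_vars_iff_mem_support j).1 hj
  exact hp (mem_support_iff.1 hm) ▸ Finsupp.le_weight_of_ne_zero' a (Finsupp.mem_support_iff.1 hjm)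

theorem IsWeightedHomogeneous.sub_mem_supported (ha : ∀ j, 0 < a j)
    (hdist : Function.Injective a) {p : MvPolynomial σ R} {i : σ}
    (hp : p.IsWeightedHomogeneous a (a i)) :
    p - C (coeff (Finsupp.single i 1) p) * X i ∈ supported R {j | a j < a i} := by
  classical
  rw [MvPolynomial.mem_supported]
  intro j hj
  obtain ⟨m, hm, hjm⟩ := (mem_vars_iff_mem_support j).1 hj
  rw [mem_support_iff, coeff_sub, coeff_C_mul, coeff_X] at hm
  have hne : m ≠ Finsupp.single i 1 := by
    rintro rfl
    simp at hm
  rw [if_neg hne.symm, mul_zero, sub_zero] at hm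
  exact Finsupp.weight_lt_of_weight_eq ha hdist (hp hm) hne (Finsupp.mem_support_iff.1 hjm)

theorem coeff_single_one_eq_zero_of_mem_supported {s : Set σ} {p : MvPolynomial σ R}
    (hp : p ∈ supported R s) {i : σ} (hi : i ∉ s) : coeff (Finsupp.single i 1) p = 0 := by
  by_contra h
  exact hi (mem_supported.1 hp ((mem_vars_iff_mem_support i).2 ⟨_, mem_support_iff.2 h, by simp⟩))

theorem map_mem_supported_of_isWeightedHomogeneous_X
    {φ : MvPolynomial σ R →ₐ[R] MvPolynomial σ R}
    (hφ : ∀ j, (φ (X j)).IsWeightedHomogeneous a (a j)) (d : ℕ) {p : MvPolynomial σ R}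
    (hp : p ∈ supported R {j | a j < d}) : φ p ∈ supported R {j | a j < d} := by
  suffices supported R {j | a j < d} ≤ (supported R {j | a j < d}).comap φ from this hp
  rw [supported_eq_adjoin_X, Algebra.adjoin_le_iff]
  rintro _ ⟨j, hj, rfl⟩
  exact supported_mono (fun k (hk : a k ≤ a j) => hk.trans_lt hj) (hφ j).mem_supported

def diagCoeff (φ : MvPolynomial σ R ≃ₐ[R] MvPolynomial σ R) (i : σ) : R :=
  coeff (Finsupp.single i 1) (φ (X i))

@[simp]
theorem diagCoeff_one (i : σ) : diagCoeff (1 : MvPolynomial σ R ≃ₐ[R] MvPolynomial σ R) i = 1 := by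
  simp [diagCoeff]

theorem diagCoeff_mul (ha : ∀ j, 0 < a j) (hdist : Function.Injective a)
    {φ ψ : MvPolynomial σ R ≃ₐ[R] MvPolynomial σ R}
    (hφ : ∀ j, (φ (X j)).IsWeightedHomogeneous a (a j))
    (hψ : ∀ j, (ψ (X j)).IsWeightedHomogeneous a (a j)) (i : σ) :
    diagCoeff (φ * ψ) i = diagCoeff φ i * diagCoeff ψ i := by
  set r := ψ (X i) - C (diagCoeff ψ i) * X i
  have hr : φ r ∈ supported R {j | a j < a i} :=
    map_mem_supported_of_isWeightedHomogeneous_X (φ := φ.toAlgHom) hφ _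
      ((hψ i).sub_mem_supported ha hdist)
  have hψX : ψ (X i) = diagCoeff ψ i • X i + r := by rw [smul_eq_C_mul]; ring
  rw [diagCoeff, AlgEquiv.mul_apply, hψX, map_add, map_smul, coeff_add, coeff_smul,
    coeff_single_one_eq_zero_of_mem_supported hr (lt_irrefl (a i)), add_zero, smul_eq_mul, mul_comm]
  rfl

def diagCoeffHom (ha : ∀ j, 0 < a j) (hdist : Function.Injective a)
    (G : Subgroup (MvPolynomial σ R ≃ₐ[R] MvPolynomial σ R))
    (hG : ∀ g ∈ G, ∀ j, (g (X j)).IsWeightedHomogeneous a (a j)) : G →* (σ → R) where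
  toFun g := diagCoeff g
  map_one' := _root_.funext diagCoeff_one
  map_mul' g h := _root_.funext (diagCoeff_mul ha hdist (hG g g.2) (hG h h.2))

theorem eq_one_of_diagCoeff_eq_one [IsDomain R] [CharZero R] (ha : ∀ j, 0 < a j)
    (hdist : Function.Injective a) {g : MvPolynomial σ R ≃ₐ[R] MvPolynomial σ R}
    (hg : ∀ j, (g (X j)).IsWeightedHomogeneous a (a j)) (hc : ∀ i, diagCoeff g i = 1)
    (hfin : IsOfFinOrder g) : g = 1 := by
  have hfix (d : ℕ) : ∀ i, a i = d → g (X i) = X i := by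
    induction d using Nat.strong_induction_on with
    | _ d ih =>
      rintro i rfl
      have hr := (hg i).sub_mem_supported ha hdist
      rw [show coeff _ (g (X i)) = 1 from hc i, C_1, one_mul] at hr
      have hgr : g (g (X i) - X i) = g (X i) - X i :=
        AlgHom.adjoin_le_equalizer g.toAlgHom (AlgHom.id R _)
          (by rintro _ ⟨j, hj, rfl⟩; exact ih (a j) hj j rfl) hr
      exact sub_eq_zero.1 (AlgEquiv.eq_zero_of_apply_eq_add_of_isOfFinOrder hfin (by abel) hgr)
  exact AlgEquiv.coe_toAlgHom_injective (algHom_ext fun i => hfix (a i) i rfl)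

end MvPolynomial

theorem IsGradedAut.isWeightedHomogeneous_X {n : ℕ} {a : Fin (n + 2) → ℕ}
    {φ : MvPolynomial (Fin (n + 2)) ℂ ≃ₐ[ℂ] MvPolynomial (Fin (n + 2)) ℂ} (hφ : IsGradedAut a φ)
    (j : Fin (n + 2)) : (φ (X j)).IsWeightedHomogeneous a (a j) :=
  (hφ (a j) (X j)).1 (MvPolynomial.isWeightedHomogeneous_X ℂ a j)

/-- If the weights `a_0,…,a_{n+1}` are pairwise distinct, every finite
subgroup of the group of graded automorphisms of the weighted polynomial ring is abelian. -/
theorem finite_subgroup_abelian_of_distinct_weights {n : ℕ} (a : Fin (n + 2) → ℕ)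
    (ha : ∀ i, 0 < a i) (hdist : Function.Injective a)
    (G : Subgroup (MvPolynomial (Fin (n + 2)) ℂ ≃ₐ[ℂ] MvPolynomial (Fin (n + 2)) ℂ))
    (hG : ∀ g ∈ G, IsGradedAut a g) (hfin : Finite G) :
    ∀ g ∈ G, ∀ h ∈ G, g * h = h * g := by
  intro g hg h hh
  have hG' (x) (hx : x ∈ G) := (hG x hx).isWeightedHomogeneous_X
  have hinj : Function.Injective (diagCoeffHom ha hdist G hG') := by
    refine (injective_iff_map_eq_one _).2 fun x hx => Subtype.ext ?_
    exact eq_one_of_diagCoeff_eq_one ha hdist (hG' x x.2) (fun i => congrFun hx i)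
      (Submonoid.isOfFinOrder_coe.2 (isOfFinOrder_of_finite x))
  have hcomm : (⟨g, hg⟩ * ⟨h, hh⟩ : G) = ⟨h, hh⟩ * ⟨g, hg⟩ :=
    hinj (by rw [map_mul, map_mul, mul_comm])
  exact congrArg Subtype.val hcomm

end
end

section
/- Let a_0,…,a_{n+1} and d be positive integers, and let B be an (n+2)×(n+2) integer matrix with the following properties: every diagonal entry B_{ii} ≥ 2; every row of B has at most one nonzero off-diagonal entry, and when present that entry equals 1; all other entries are 0; and every row satisfies Σ_j B_{ij}·a_j = d. Then B is invertible and 0 < det(B) ≤ d^{n+2}/(a_0·a_1⋯a_{n+1}). -/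
open MvPolynomial

noncomputable section

set_option maxHeartbeats 1000000

open Finset in
lemma det_ne_zero_of_dom {m : ℕ} (M : Matrix (Fin m) (Fin m) ℝ)
    (hdiag : ∀ i, 2 ≤ M i i)
    (hoffsum : ∀ i, ∑ j ∈ Finset.univ.erase i, |M i j| ≤ 1) : M.det ≠ 0 := by
  intro h
  obtain ⟨v, hv, hMv⟩ := Matrix.exists_mulVec_eq_zero_iff.mpr h
  obtain ⟨i0, hi0⟩ := Function.ne_iff.mp hv
  obtain ⟨i, -, hi⟩ := Finset.exists_max_image Finset.univ (fun k => |v k|)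
    ⟨i0, Finset.mem_univ _⟩
  have hrow : ∑ j, M i j * v j = 0 := congrFun hMv i
  have hsplit : M i i * v i + ∑ j ∈ Finset.univ.erase i, M i j * v j = 0 := by
    rw [Finset.add_sum_erase Finset.univ (fun j => M i j * v j) (Finset.mem_univ i)]
    exact hrow
  have hsplit' : M i i * v i = -∑ j ∈ Finset.univ.erase i, M i j * v j := by linarith
  have hb : |M i i * v i| ≤ |v i| := by
    rw [hsplit', abs_neg]
    calc |∑ j ∈ Finset.univ.erase i, M i j * v j|
        ≤ ∑ j ∈ Finset.univ.erase i, |M i j * v j| := Finset.abs_sum_le_sum_abs _ _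
      _ ≤ ∑ j ∈ Finset.univ.erase i, |M i j| * |v i| := by
          refine Finset.sum_le_sum fun j _ => ?_
          rw [abs_mul]
          exact mul_le_mul_of_nonneg_left (hi j (Finset.mem_univ j)) (abs_nonneg _)
      _ = (∑ j ∈ Finset.univ.erase i, |M i j|) * |v i| := by rw [Finset.sum_mul]
      _ ≤ 1 * |v i| := mul_le_mul_of_nonneg_right (hoffsum i) (abs_nonneg _)
      _ = |v i| := one_mul _
  have h2 : 2 * |v i| ≤ |M i i * v i| := by
    rw [abs_mul, abs_of_nonneg (by linarith [hdiag i] : (0:ℝ) ≤ M i i)]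
    exact mul_le_mul_of_nonneg_right (hdiag i) (abs_nonneg _)
  have hvi : |v i| = 0 := by
    have := abs_nonneg (v i)
    linarith
  have : v i0 = 0 := abs_eq_zero.mp <|
    le_antisymm (by simpa [hvi] using hi i0 (Finset.mem_univ i0)) (abs_nonneg _)
  exact hi0 this

/-- An integer matrix with diagonal entries at least 2, at most one
off-diagonal entry in each row (equal to 1 when present), all of whose rows give relations
`Σⱼ B_{ij}·aⱼ = d`, is invertible and has determinant between `0` and `d^{n+2}/(a_0⋯a_{n+1})`. -/
theorem loop_matrix_determinant_bound (n : ℕ) (a : Fin (n + 2) → ℕ) (ha : ∀ i, 0 < a i)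
    (d : ℕ) (B : Matrix (Fin (n + 2)) (Fin (n + 2)) ℤ)
    (hdiag : ∀ i, 2 ≤ B i i)
    (hoff : ∀ i j, j ≠ i → B i j = 0 ∨ B i j = 1)
    (honce : ∀ i j k, j ≠ i → k ≠ i → B i j ≠ 0 → B i k ≠ 0 → j = k)
    (hrow : ∀ i, ∑ j, B i j * (a j : ℤ) = (d : ℤ)) :
    IsUnit (B.map ((↑) : ℤ → ℚ)).det ∧ 0 < B.det ∧
      (B.det : ℝ) ≤ (d : ℝ) ^ (n + 2) / ∏ i, (a i : ℝ) := by
  have hsum : ∀ i, ∑ j ∈ Finset.univ.erase i, |B i j| ≤ (1 : ℤ) := by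
    intro i
    by_cases hz : ∀ j ∈ Finset.univ.erase i, B i j = 0
    · rw [Finset.sum_eq_zero (fun j hj => abs_eq_zero.mpr (hz j hj))]; norm_num
    · push_neg at hz
      obtain ⟨j0, hj0mem, hj0⟩ := hz
      have hj0i : j0 ≠ i := Finset.ne_of_mem_erase hj0mem
      have heq : ∑ j ∈ Finset.univ.erase i, |B i j| = |B i j0| := by
        refine Finset.sum_eq_single_of_mem j0 hj0mem fun k hk hkj0 => ?_
        have hki : k ≠ i := Finset.ne_of_mem_erase hk
        by_contra habs
        exact hkj0 (honce i k j0 hki hj0i (fun h => habs (by rw [h, abs_zero])) hj0)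
      rw [heq]
      rcases hoff i j0 hj0i with h | h
      · exact absurd h hj0
      · rw [h]; norm_num
  have hB0 : ∀ i j, (0 : ℤ) ≤ B i j := by
    intro i j
    rcases eq_or_ne j i with rfl | hji
    · linarith [hdiag j]
    · rcases hoff i j hji with h | h <;> simp [h]
  -- positivity of det over ℝ via a continuity argument
  set F : ℝ → Matrix (Fin (n + 2)) (Fin (n + 2)) ℝ :=
    fun t => Matrix.of fun i j => if i = j then (B i i : ℝ) else t * (B i j : ℝ) with hF
  have hFcont : Continuous F := by
    refine continuous_pi fun i => continuous_pi fun j => ?_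
    rcases eq_or_ne i j with rfl | hij
    · simp only [hF, Matrix.of_apply, if_pos rfl]
      exact continuous_const
    · simp only [hF, Matrix.of_apply, if_neg hij]
      exact continuous_id.mul continuous_const
  have hFdet : ∀ t ∈ Set.Icc (0:ℝ) 1, (F t).det ≠ 0 := by
    intro t ht
    refine det_ne_zero_of_dom _ (fun i => ?_) (fun i => ?_)
    · have he : F t i i = (B i i : ℝ) := by simp [hF]
      rw [he]; exact_mod_cast hdiag i
    calc ∑ j ∈ Finset.univ.erase i, |F t i j|
        = ∑ j ∈ Finset.univ.erase i, |t| * |(B i j : ℝ)| := by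
          refine Finset.sum_congr rfl fun j hj => ?_
          simp only [hF, Matrix.of_apply, if_neg (Finset.ne_of_mem_erase hj).symm, abs_mul]
      _ ≤ ∑ j ∈ Finset.univ.erase i, 1 * |(B i j : ℝ)| := by
          refine Finset.sum_le_sum fun j _ => ?_
          exact mul_le_mul_of_nonneg_right (abs_le.mpr ⟨by linarith [ht.1], ht.2⟩) (abs_nonneg _)
      _ = ∑ j ∈ Finset.univ.erase i, |(B i j : ℝ)| := by simp
      _ ≤ 1 := by
          calc ∑ j ∈ Finset.univ.erase i, |(B i j : ℝ)|
              = ((∑ j ∈ Finset.univ.erase i, |B i j| : ℤ) : ℝ) := by push_cast; rfl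
            _ ≤ ((1:ℤ):ℝ) := by exact_mod_cast hsum i
            _ = 1 := by norm_num
  have hF0 : 0 < (F 0).det := by
    have hd : F 0 = Matrix.diagonal (fun i => (B i i : ℝ)) := by
      ext i j
      rcases eq_or_ne i j with rfl | hij
      · simp [hF, Matrix.diagonal]
      · simp [hF, Matrix.diagonal_apply_ne _ hij, hij]
    rw [hd, Matrix.det_diagonal]
    exact Finset.prod_pos fun i _ =>
      (by exact_mod_cast (by linarith [hdiag i] : (0:ℤ) < B i i) : (0:ℝ) < (B i i : ℝ))
  have hF1 : (F 1).det = (B.det : ℝ) := by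
    have hmap : F 1 = B.map ((↑) : ℤ → ℝ) := by
      ext i j
      rcases eq_or_ne i j with rfl | hij <;> simp [hF, Matrix.map, *]
    rw [hmap]
    exact (RingHom.map_det (Int.castRingHom ℝ) B).symm
  have hdetpos : 0 < B.det := by
    by_contra hle
    push_neg at hle
    have hne : (F 1).det ≠ 0 := hFdet 1 ⟨by norm_num, le_refl _⟩
    have hlt : (F 1).det < 0 := by
      rcases lt_or_eq_of_le hle with h | h
      · rw [hF1]; exact_mod_cast h
      · exact absurd (by rw [hF1, h]; norm_num) hne
    have hcont : ContinuousOn (fun t => (F t).det) (Set.Icc (0:ℝ) 1) :=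
      (hFcont.matrix_det).continuousOn
    obtain ⟨t, ht, htz⟩ := intermediate_value_Icc' (by norm_num : (0:ℝ) ≤ 1) hcont
      ⟨le_of_lt hlt, le_of_lt hF0⟩
    exact hFdet t ht htz
  -- Upper bound over ℤ
  have hupper : (∏ j, (a j : ℤ)) * B.det ≤ (d : ℤ) ^ (n + 2) := by
    set C : Matrix (Fin (n + 2)) (Fin (n + 2)) ℤ := Matrix.of fun i j => (a j : ℤ) * B i j
      with hC
    have hCnn : ∀ i j, (0:ℤ) ≤ C i j := fun i j =>
      mul_nonneg (by positivity) (hB0 _ _)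
    have hdetC : C.det = (∏ j, (a j : ℤ)) * B.det := Matrix.det_mul_row _ B
    have step1 : C.det ≤ ∑ σ : Equiv.Perm (Fin (n + 2)), ∏ i, C i (σ i) := by
      rw [← Matrix.det_transpose, Matrix.det_apply]
      refine Finset.sum_le_sum fun σ _ => ?_
      have hT : ∏ i, C.transpose (σ i) i = ∏ i, C i (σ i) := by
        simp [Matrix.transpose_apply]
      have hnn : (0:ℤ) ≤ ∏ i, C.transpose (σ i) i := by
        rw [hT]; exact Finset.prod_nonneg fun i _ => hCnn _ _
      rcases Int.units_eq_one_or (Equiv.Perm.sign σ) with h | h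
      · simp [h, hT]
      · rw [hT] at hnn; simp only [h]
        simpa [hT] using by linarith
    have step2 : ∑ σ : Equiv.Perm (Fin (n + 2)), ∏ i, C i (σ i)
        ≤ ∑ f : Fin (n + 2) → Fin (n + 2), ∏ i, C i (f i) := by
      let e : Equiv.Perm (Fin (n + 2)) ↪ (Fin (n + 2) → Fin (n + 2)) :=
        ⟨fun σ => ⇑σ, fun σ τ h => Equiv.ext (congrFun h)⟩
      have himg : ∑ σ : Equiv.Perm (Fin (n + 2)), ∏ i, C i (σ i)
          = ∑ f ∈ Finset.univ.map e, ∏ i, C i (f i) :=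
        (Finset.sum_map Finset.univ e (fun f => ∏ i, C i (f i))).symm
      rw [himg]
      exact Finset.sum_le_sum_of_subset_of_nonneg (Finset.subset_univ _)
        fun f _ _ => Finset.prod_nonneg fun i _ => hCnn _ _
    have step3 : ∑ f : Fin (n + 2) → Fin (n + 2), ∏ i, C i (f i) = (d : ℤ) ^ (n + 2) := by
      have hps := (Finset.prod_univ_sum (fun _ : Fin (n + 2) => (Finset.univ : Finset (Fin (n + 2))))
        (fun i j => C i j)).symm
      rw [Fintype.piFinset_univ] at hps
      rw [hps]
      have hrs : ∀ i : Fin (n + 2), ∑ j, C i j = (d : ℤ) := by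
        intro i
        rw [hC]
        simp only [Matrix.of_apply]
        rw [← hrow i]
        exact Finset.sum_congr rfl fun j _ => mul_comm _ _
      rw [Finset.prod_congr rfl fun i _ => hrs i]
      simp
    calc (∏ j, (a j : ℤ)) * B.det = C.det := hdetC.symm
      _ ≤ _ := step1
      _ ≤ _ := step2
      _ = _ := step3
  have hprodpos : (0:ℝ) < ∏ i, (a i : ℝ) :=
    Finset.prod_pos fun i _ => by exact_mod_cast ha i
  refine ⟨?_, hdetpos, ?_⟩
  · have hq : (B.map ((↑) : ℤ → ℚ)).det = (B.det : ℚ) :=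
      (RingHom.map_det (Int.castRingHom ℚ) B).symm
    rw [hq]
    exact isUnit_iff_ne_zero.mpr (by exact_mod_cast hdetpos.ne')
  · rw [le_div_iff₀ hprodpos]
    calc (B.det : ℝ) * ∏ i, (a i : ℝ) = (((∏ j, (a j : ℤ)) * B.det : ℤ) : ℝ) := by
          push_cast; ring
      _ ≤ (((d:ℤ)^(n+2) : ℤ) : ℝ) := by exact_mod_cast hupper
      _ = (d:ℝ)^(n+2) := by push_cast; ring

end
end

section
/- Let f ∈ S be weighted-homogeneous of degree d, and suppose that for each i ∈ {0,…,n+1} the polynomial f contains, with nonzero coefficient, a monomial of the form x_i^{b_i} or x_i^{b_i}·x_j (j ≠ i) with b_i ≥ 2. Then the group D_f := {(c_0,…,c_{n+1}) ∈ (ℂ^×)^{n+2} : f(c_0 x_0,…,c_{n+1}x_{n+1}) = f} of diagonal substitutions fixing f is finite of order at most d^{n+2}/(a_0·a_1⋯a_{n+1}). -/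
open MvPolynomial

noncomputable section

/-!
For every `i` pick a monomial `x^{m_i}` of `f` in which `x_i` dominates, `deg m_i < 2 m_{i,i}`.
A diagonal substitution `c` fixing `f` must satisfy `c^{m_i} = 1` for all `i`. If `M` is the
integer matrix with columns `m_i`, such `c` are exactly the characters of `ℤ^{n+2}` trivial on
`M ℤ^{n+2}`, so `|D_f| ≤ [ℤ^{n+2} : M ℤ^{n+2}] = |det M|`; `M` is nonsingular because it is
diagonally dominant. Weighted homogeneity says that every column of `diag(a) M` sums to `d`, and
the determinant of a nonnegative matrix is at most the product of its column sums, so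
`a_0 ⋯ a_{n+1} |det M| ≤ d^{n+2}`.
-/

namespace MvPolynomial

variable {σ : Type*}

theorem coeff_aeval_smul_X [Fintype σ] {R : Type*} [CommSemiring R] (z : σ → R)
    (p : MvPolynomial σ R) (m : σ →₀ ℕ) :
    coeff m (aeval (fun i => z i • X i) p) = (∏ i, z i ^ m i) * coeff m p := by
  classical
  induction p using MvPolynomial.induction_on' with
  | monomial s r =>
    have hs : aeval (fun i => z i • X i) (monomial s r) = monomial s (r * ∏ i, z i ^ s i) := by
      rw [aeval_monomial, monomial_eq, C_mul, mul_assoc, ← Finsupp.prod_fintype s _ (by simp),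
        map_finsuppProd]
      simp only [smul_eq_C_mul, mul_pow, Finsupp.prod_mul, map_pow, algebraMap_eq]
    rw [hs, coeff_monomial, coeff_monomial]
    split_ifs with h <;> simp [h, mul_comm]
  | add p q hp hq => rw [map_add, coeff_add, hp, hq, coeff_add, mul_add]

theorem prod_pow_eq_one_of_aeval_smul_X_eq [Fintype σ] {R : Type*} [CommSemiring R] [IsDomain R]
    {z : σ → R} {p : MvPolynomial σ R} (hp : aeval (fun i => z i • X i) p = p)
    {m : σ →₀ ℕ} (hm : coeff m p ≠ 0) : ∏ i, z i ^ m i = 1 :=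
  (mul_eq_right₀ hm).mp (by rw [← coeff_aeval_smul_X, hp])

theorem exists_coeff_ne_zero_degree_lt_two_mul {R : Type*} [CommSemiring R]
    {f : MvPolynomial σ R} {i : σ}
    (h : ∃ b : ℕ, 2 ≤ b ∧ (coeff (Finsupp.single i b) f ≠ 0 ∨
      ∃ j, j ≠ i ∧ coeff (Finsupp.single i b + Finsupp.single j 1) f ≠ 0)) :
    ∃ m : σ →₀ ℕ, coeff m f ≠ 0 ∧ m.degree < 2 * m i := by
  obtain ⟨b, hb, h | ⟨j, -, h⟩⟩ := h
  · exact ⟨_, h, by simp; omega⟩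
  · exact ⟨_, h, by simp; omega⟩

end MvPolynomial

namespace Matrix

section

variable {ι : Type*} [Fintype ι]

theorem abs_det_le_prod_sum_col [DecidableEq ι] {R : Type*} [CommRing R] [LinearOrder R]
    [IsStrictOrderedRing R] {B : Matrix ι ι R} (hB : ∀ i j, 0 ≤ B i j) :
    |B.det| ≤ ∏ j, ∑ i, B i j := by
  have hprod (f : ι → ι) : 0 ≤ ∏ j, B (f j) j := Finset.prod_nonneg fun j _ => hB _ _
  calc |B.det| ≤ ∑ σ : Equiv.Perm ι, |Equiv.Perm.sign σ • ∏ j, B (σ j) j| := by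
        rw [det_apply]; exact Finset.abs_sum_le_sum_abs _ _
    _ = ∑ f ∈ Finset.univ.map ⟨_, DFunLike.coe_injective⟩, ∏ j, B (f j) j := by
        simp [Units.smul_def, abs_unit_intCast, abs_of_nonneg (hprod _)]; rfl
    _ ≤ ∑ f : ι → ι, ∏ j, B (f j) j :=
        Finset.sum_le_sum_of_subset_of_nonneg (Finset.subset_univ _) fun f _ _ => hprod f
    _ = ∏ j, ∑ i, B i j := (Finset.prod_univ_sum (fun _ => Finset.univ) fun j i => B i j).symm

theorem abs_det_mul_prod_le_pow [DecidableEq ι] {R : Type*} [CommRing R] [LinearOrder R]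
    [IsStrictOrderedRing R] {A : Matrix ι ι R} (hA : ∀ i j, 0 ≤ A i j) {a : ι → R}
    (ha : ∀ i, 0 ≤ a i) {d : R} (hcol : ∀ j, ∑ i, a i * A i j = d) :
    |A.det| * ∏ i, a i ≤ d ^ Fintype.card ι := by
  have h := abs_det_le_prod_sum_col (B := diagonal a * A)
    fun i j => by rw [diagonal_mul]; exact mul_nonneg (ha i) (hA i j)
  rw [det_mul, det_diagonal, abs_mul, abs_of_nonneg (Finset.prod_nonneg fun i _ => ha i),
    mul_comm] at h
  simpa only [diagonal_mul, hcol, Finset.prod_const, Finset.card_univ] using h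

theorem det_ne_zero_of_sum_col_lt_two_mul_diag [DecidableEq ι] {A : Matrix ι ι ℤ}
    (hA : ∀ i j, 0 ≤ A i j) (h : ∀ j, ∑ i, A i j < 2 * A j j) : A.det ≠ 0 := by
  have hdet : (A.map (Int.cast : ℤ → ℝ)).det ≠ 0 := by
    refine det_ne_zero_of_sum_col_lt_diag fun j => ?_
    simp only [map_apply, Real.norm_eq_abs, ← Int.cast_abs, abs_of_nonneg (hA _ _)]
    rw [← Int.cast_sum, Finset.sum_erase_eq_sub (Finset.mem_univ j)]
    exact_mod_cast (by linarith [h j] : ∑ i, A i j - A j j < A j j)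
  rw [← Int.cast_det] at hdet
  exact_mod_cast hdet

theorem natAbs_det_eq_card_quotient_range_mulVecLin [DecidableEq ι] {A : Matrix ι ι ℤ}
    (hA : A.det ≠ 0) :
    A.det.natAbs = Nat.card ((ι → ℤ) ⧸ LinearMap.range A.mulVecLin) := by
  let e := LinearEquiv.ofInjective A.mulVecLin (mulVec_injective_of_det_ne_zero hA)
  rw [← Submodule.natAbs_det_equiv _ e, ← LinearMap.det_toLin', toLin'_apply']
  rfl

theorem finite_quotient_range_mulVecLin [DecidableEq ι] {A : Matrix ι ι ℤ} (hA : A.det ≠ 0) :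
    Finite ((ι → ℤ) ⧸ LinearMap.range A.mulVecLin) :=
  Nat.finite_of_card_ne_zero <| by
    rw [← natAbs_det_eq_card_quotient_range_mulVecLin hA]; exact Int.natAbs_ne_zero.mpr hA

def torusKernel (A : Matrix ι ι ℤ) : Set (ι → ℂˣ) :=
  {c | ∀ i, ∏ k, c k ^ A k i = 1}

theorem range_mulVecLin_le_ker_linearCombination {A : Matrix ι ι ℤ} {c : ι → ℂˣ}
    (hc : c ∈ A.torusKernel) :
    LinearMap.range A.mulVecLin ≤
      LinearMap.ker (Fintype.linearCombination ℤ fun k => Additive.ofMul (c k)) := by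
  rw [range_mulVecLin, Submodule.span_le]
  rintro _ ⟨i, rfl⟩
  simp [Fintype.linearCombination_apply, ← ofMul_zpow, ← ofMul_prod, hc i]

/-- The character `v ↦ ∏ k, c k ^ v k` of `ℤ^ι`, which is trivial on the columns of `A`. -/
def torusKernelToAddChar (A : Matrix ι ι ℤ) (c : A.torusKernel) :
    AddChar ((ι → ℤ) ⧸ LinearMap.range A.mulVecLin) ℂ :=
  (Units.coeHom ℂ).compAddChar <| AddChar.toAddMonoidHomEquiv.symm <|
    (LinearMap.range A.mulVecLin).liftQ _ (range_mulVecLin_le_ker_linearCombination c.2)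

theorem torusKernelToAddChar_injective [DecidableEq ι] (A : Matrix ι ι ℤ) :
    Function.Injective A.torusKernelToAddChar := by
  intro c c' h
  ext1; funext k; ext1
  simpa [torusKernelToAddChar, Fintype.linearCombination_apply_single] using
    DFunLike.congr_fun h (Submodule.Quotient.mk (Pi.single k 1))

theorem finite_torusKernel [DecidableEq ι] {A : Matrix ι ι ℤ} (hA : A.det ≠ 0) :
    A.torusKernel.Finite :=
  have := finite_quotient_range_mulVecLin hA
  Finite.of_injective _ A.torusKernelToAddChar_injective

theorem card_torusKernel_le [DecidableEq ι] {A : Matrix ι ι ℤ} (hA : A.det ≠ 0) :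
    Nat.card A.torusKernel ≤ A.det.natAbs := by
  have := finite_quotient_range_mulVecLin hA
  have := Fintype.ofFinite ((ι → ℤ) ⧸ LinearMap.range A.mulVecLin)
  calc Nat.card A.torusKernel
      ≤ Nat.card (AddChar ((ι → ℤ) ⧸ LinearMap.range A.mulVecLin) ℂ) :=
        Nat.card_le_card_of_injective _ A.torusKernelToAddChar_injective
    _ ≤ Nat.card ((ι → ℤ) ⧸ LinearMap.range A.mulVecLin) := by
        simpa only [Nat.card_eq_fintype_card] using AddChar.card_addChar_le _ ℂ
    _ = A.det.natAbs := (natAbs_det_eq_card_quotient_range_mulVecLin hA).symm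

end

section

variable {ι : Type*}

def ofExponents (m : ι → ι →₀ ℕ) : Matrix ι ι ℤ :=
  of fun k i => (m i k : ℤ)

theorem ofExponents_nonneg (m : ι → ι →₀ ℕ) (k i : ι) : 0 ≤ ofExponents m k i :=
  Int.natCast_nonneg _

variable [Fintype ι]

theorem sum_mul_ofExponents (w : ι → ℕ) (m : ι → ι →₀ ℕ) (i : ι) :
    ∑ k, (w k : ℤ) * ofExponents m k i = Finsupp.weight w (m i) := by
  simp [ofExponents, Finsupp.weight_apply, Finsupp.sum_fintype, mul_comm]

theorem det_ofExponents_ne_zero [DecidableEq ι] {m : ι → ι →₀ ℕ}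
    (hm : ∀ i, (m i).degree < 2 * m i i) : (ofExponents m).det ≠ 0 :=
  det_ne_zero_of_sum_col_lt_two_mul_diag (ofExponents_nonneg m) fun i => by
    have := hm i
    rw [Finsupp.degree_eq_sum] at this
    simp only [ofExponents, of_apply]
    exact_mod_cast this

theorem mem_torusKernel_ofExponents {f : MvPolynomial ι ℂ} {m : ι → ι →₀ ℕ}
    (hm : ∀ i, coeff (m i) f ≠ 0) {c : ι → ℂˣ}
    (hc : aeval (fun i => (c i : ℂ) • X i) f = f) : c ∈ (ofExponents m).torusKernel := by
  intro i
  ext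
  simpa [ofExponents] using prod_pow_eq_one_of_aeval_smul_X_eq hc (hm i)

end

end Matrix

/-- If, for each `i`, the weighted-homogeneous polynomial `f` of degree `d`
contains with nonzero coefficient a monomial `x_i^{b_i}` or `x_i^{b_i}·x_j` (`j ≠ i`) with
`b_i ≥ 2`, then the group of diagonal substitutions fixing `f` is finite of order at most
`d^{n+2}/(a_0⋯a_{n+1})`. -/
theorem diagonal_stabilizer_bound {n : ℕ} (a : Fin (n + 2) → ℕ) (ha : ∀ i, 0 < a i)
    (d : ℕ) (f : MvPolynomial (Fin (n + 2)) ℂ) (hfh : f.IsWeightedHomogeneous a d)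
    (hmon : ∀ i : Fin (n + 2), ∃ b : ℕ, 2 ≤ b ∧
      (coeff (Finsupp.single i b) f ≠ 0 ∨
        ∃ j : Fin (n + 2), j ≠ i ∧ coeff (Finsupp.single i b + Finsupp.single j 1) f ≠ 0)) :
    Finite {c : Fin (n + 2) → ℂˣ //
        aeval (fun i => ((c i : ℂ)) • (X i : MvPolynomial (Fin (n + 2)) ℂ)) f = f} ∧
      (Nat.card {c : Fin (n + 2) → ℂˣ //
          aeval (fun i => ((c i : ℂ)) • (X i : MvPolynomial (Fin (n + 2)) ℂ)) f = f} : ℝ)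
        ≤ (d : ℝ) ^ (n + 2) / ∏ i, (a i : ℝ) := by
  choose m hmf hdom using fun i => exists_coeff_ne_zero_degree_lt_two_mul (hmon i)
  set M := Matrix.ofExponents m
  have hM : M.det ≠ 0 := Matrix.det_ofExponents_ne_zero hdom
  have hsub : {c | aeval (fun i => (c i : ℂ) • X i) f = f} ⊆ M.torusKernel :=
    fun c hc => Matrix.mem_torusKernel_ofExponents hmf hc
  have hcard : Nat.card {c : Fin (n + 2) → ℂˣ | aeval (fun i => (c i : ℂ) • X i) f = f}
      ≤ M.det.natAbs :=
    (Nat.card_mono (Matrix.finite_torusKernel hM) hsub).trans (Matrix.card_torusKernel_le hM)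
  have hdet : (M.det.natAbs : ℤ) * ∏ i, (a i : ℤ) ≤ (d : ℤ) ^ (n + 2) := by
    simpa only [Int.natCast_natAbs, Fintype.card_fin] using
      Matrix.abs_det_mul_prod_le_pow (Matrix.ofExponents_nonneg m)
        (fun i => Int.natCast_nonneg (a i)) fun i => by rw [Matrix.sum_mul_ofExponents, hfh (hmf i)]
  refine ⟨(Matrix.finite_torusKernel hM).subset hsub, ?_⟩
  rw [le_div_iff₀ (Finset.prod_pos fun i _ => by exact_mod_cast ha i)]
  calc (Nat.card _ : ℝ) * ∏ i, (a i : ℝ) ≤ M.det.natAbs * ∏ i, (a i : ℝ) := by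
        gcongr; exact_mod_cast hcard
    _ ≤ (d : ℝ) ^ (n + 2) := by exact_mod_cast hdet

end
end

section
/- Suppose d ≥ 5·max{a_0,…,a_{n+1}} and let f ∈ S be a nonzero weighted-homogeneous quasismooth polynomial of degree d. Let β ∈ Aut(S) be a diagonal graded automorphism, β(x_i) = c_i·x_i with c_i ∈ ℂ^×, satisfying β(f) = c·f for some c ∈ ℂ^×. Define Γ to be the (finite) set of pairs (i, y) where i ∈ {0,…,n+1} and y is a monomial of weighted degree a_i with β(y) ≠ c_i·y. If Γ is nonempty, then the number of monomials of weighted degree d whose coefficient in f is zero is at least |Γ| + 1. -/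
/-!
Every monomial of `f` is a `β`-eigenvector with eigenvalue `c₀`, so monomials of degree `d` with
another eigenvalue have zero coefficient. Quasismoothness at the coordinate point `e_t` gives a
monomial `x_t ^ k_t * E_t` of `f` with `E_t = 1` or `E_t = x_j`, `j ≠ t`, and `d ≥ 5 max aᵢ`
forces `k_t ≥ 4`. The map `(t, y) ↦ x_t ^ (k_t - 1) * E_t * y` sends `Γ` injectively into the
monomials of degree `d` with eigenvalue `≠ c₀`. One more such monomial, divisible by no
`x_t ^ (k_t - 1) * E_t`, is `x_t ^ (k_t + 1)` if some `E_t = x_j` has `a_j = a_t` and `c_j ≠ c_t`,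
and otherwise `x_i ^ (k_i - s) * y ^ s * E_i` for any `(i, y) ∈ Γ` and a suitable `s ∈ {2, 3}`.
-/

open MvPolynomial

noncomputable section

/-- Quasismoothness of the hypersurface `{f = 0}`: the punctured affine cone is smooth, i.e.
at every nonzero point of the affine cone some partial derivative of `f` is nonzero. -/
def Quasismooth {n : ℕ} (f : MvPolynomial (Fin (n + 2)) ℂ) : Prop :=
  ∀ x : Fin (n + 2) → ℂ, x ≠ 0 → eval x f = 0 → ∃ i, eval x (pderiv i f) ≠ 0

open Finsupp

section MonomialChar

variable {σ M : Type*} [CommMonoid M]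

/-- The eigenvalue of `x ^ m` under the diagonal automorphism `x_j ↦ c j • x_j`. -/
def monomialChar (c : σ → M) (m : σ →₀ ℕ) : M := m.prod fun j e => c j ^ e

@[simp]
lemma monomialChar_zero (c : σ → M) : monomialChar c 0 = 1 := prod_zero_index

lemma monomialChar_add (c : σ → M) (m m' : σ →₀ ℕ) :
    monomialChar c (m + m') = monomialChar c m * monomialChar c m' :=
  prod_add_index' (fun _ => pow_zero _) fun _ _ _ => pow_add _ _ _

@[simp]
lemma monomialChar_single (c : σ → M) (j : σ) (e : ℕ) :
    monomialChar c (single j e) = c j ^ e :=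
  prod_single_index (pow_zero _)

lemma monomialChar_nsmul (c : σ → M) (s : ℕ) (m : σ →₀ ℕ) :
    monomialChar c (s • m) = monomialChar c m ^ s := by
  induction s with
  | zero => simp
  | succ s ih => rw [succ_nsmul, monomialChar_add, ih, pow_succ]

lemma Units.val_monomialChar (c : σ → Mˣ) (m : σ →₀ ℕ) :
    ((monomialChar c m : Mˣ) : M) = monomialChar (fun j => (c j : M)) m :=
  map_finsuppProd (Units.coeHom M) _ _

lemma MvPolynomial.coeff_aeval_smul_X_s17 {R : Type*} [CommSemiring R] (c : σ → R)
    (f : MvPolynomial σ R) (m : σ →₀ ℕ) :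
    coeff m (aeval (fun i => c i • X i) f) = monomialChar c m * coeff m f := by
  classical
  induction f using MvPolynomial.induction_on' with
  | add p q hp hq => simp only [map_add, coeff_add, hp, hq, mul_add]
  | monomial n r =>
    have : aeval (fun i => c i • X i) (monomial n r) = monomial n (monomialChar c n * r) := by
      rw [aeval_monomial, monomial_eq, C_mul, algebraMap_eq, monomialChar, map_finsuppProd]
      simp only [smul_eq_C_mul, mul_pow, Finsupp.prod_mul, map_pow]
      ring
    rw [this, coeff_monomial, coeff_monomial]
    split_ifs with h <;> simp [h]

lemma MvPolynomial.monomialChar_eq_of_coeff_ne_zero {R : Type*} [CommRing R] [IsDomain R]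
    {c : σ → R} {c₀ : R} {f : MvPolynomial σ R} (hβ : aeval (fun i => c i • X i) f = c₀ • f)
    {m : σ →₀ ℕ} (hm : coeff m f ≠ 0) : monomialChar c m = c₀ := by
  have h := coeff_aeval_smul_X_s17 c f m
  rw [hβ, coeff_smul, smul_eq_mul] at h
  exact mul_right_cancel₀ hm h.symm

lemma MvPolynomial.monomialChar_units_eq_of_coeff_ne_zero {R : Type*} [CommRing R] [IsDomain R]
    {c : σ → Rˣ} {c₀ : Rˣ} {f : MvPolynomial σ R}
    (hβ : aeval (fun i => (c i : R) • X i) f = (c₀ : R) • f) {m : σ →₀ ℕ} (hm : coeff m f ≠ 0) :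
    monomialChar c m = c₀ :=
  Units.ext ((Units.val_monomialChar c m).trans (monomialChar_eq_of_coeff_ne_zero hβ hm))

end MonomialChar

lemma Finsupp.sum_apply_mul_le_weight {σ : Type*} (a : σ → ℕ) (y : σ →₀ ℕ) (s : Finset σ) :
    ∑ x ∈ s, y x * a x ≤ weight a y := by
  rw [weight_apply, Finsupp.sum]
  exact Finset.sum_le_sum_of_ne_zero fun x _ hx =>
    Finsupp.mem_support_iff.mpr (left_ne_zero_of_mul hx)

lemma Finsupp.apply_mul_le_weight {σ : Type*} (a : σ → ℕ) (y : σ →₀ ℕ) (w : σ) :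
    y w * a w ≤ weight a y := by
  simpa using sum_apply_mul_le_weight a y {w}

lemma Finsupp.eq_single_one_of_weight_le {σ : Type*} {a : σ → ℕ} (ha : ∀ i, 0 < a i)
    {y : σ →₀ ℕ} {w : σ} (hy : weight a y ≤ a w) (hw : y w ≠ 0) : y = single w 1 := by
  have hle := apply_mul_le_weight a y w
  have hyw : y w = 1 := by
    by_contra hne
    have : 2 * a w ≤ y w * a w := Nat.mul_le_mul_right _ (by omega)
    have := ha w
    omega
  have : NonTorsionWeight ℕ a := nonTorsionWeight_of ℕ (w := a) fun i => (ha i).ne'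
  have herase : y.erase w = 0 := by
    rw [← weight_eq_zero_iff_eq_zero a]
    have := congrArg (weight a) (single_add_erase w y)
    rw [map_add, weight_single, hyw, one_smul] at this
    omega
  rw [← single_add_erase w y, herase, hyw, add_zero]

section PivotSystem

variable {σ G : Type*} [CommGroup G]

def nonEigenMonomials (a : σ → ℕ) (d : ℕ) (c : σ → G) (χ : G) : Set (σ →₀ ℕ) :=
  {m | weight a m = d ∧ monomialChar c m ≠ χ}

/-- The set `Γ`. -/
def nonEigenPairs (a : σ → ℕ) (c : σ → G) : Set (σ × (σ →₀ ℕ)) :=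
  {p | p.2 ∈ nonEigenMonomials a (a p.1) c (c p.1)}

/-- All the count uses of `f`: for each `t`, a monomial `x_t ^ k t * E t` of `f`
(see `Quasismooth.exists_coeff_ne_zero`). -/
structure PivotSystem (a : σ → ℕ) (d : ℕ) (c : σ → G) (c₀ : G) where
  k : σ → ℕ
  E : σ → σ →₀ ℕ
  E_eq : ∀ t, E t = 0 ∨ ∃ j ≠ t, E t = single j 1
  weight_eq : ∀ t, k t * a t + weight a (E t) = d
  monomialChar_eq : ∀ t, c t ^ k t * monomialChar c (E t) = c₀

namespace PivotSystem

variable {a : σ → ℕ} {d : ℕ} {c : σ → G} {c₀ : G} (P : PivotSystem a d c c₀)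

def divisor (t : σ) : σ →₀ ℕ := single t (P.k t - 1) + P.E t

def lift (p : σ × (σ →₀ ℕ)) : σ →₀ ℕ := P.divisor p.1 + p.2

lemma E_apply_self (t : σ) : P.E t t = 0 := by
  obtain h | ⟨j, hj, h⟩ := P.E_eq t
  · simp [h]
  · simp [h, single_eq_of_ne' hj]

lemma E_apply_le_one (t x : σ) : P.E t x ≤ 1 := by
  classical
  obtain h | ⟨j, -, h⟩ := P.E_eq t
  · simp [h]
  · rw [h, single_apply]
    split_ifs <;> omega

lemma E_eq_single_of_apply_ne_zero {t x : σ} (hx : P.E t x ≠ 0) : P.E t = single x 1 := by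
  obtain h | ⟨j, -, h⟩ := P.E_eq t
  · simp [h] at hx
  · obtain rfl : j = x := by by_contra hjx; simp [h, single_eq_of_ne' hjx] at hx
    exact h

lemma five_mul_weight_E_le (hd : ∀ i, 5 * a i ≤ d) (t : σ) : 5 * weight a (P.E t) ≤ d := by
  obtain h | ⟨j, -, h⟩ := P.E_eq t <;> simp [h, weight_single, hd]

lemma four_le_k (ha : ∀ i, 0 < a i) (hd : ∀ i, 5 * a i ≤ d) (t : σ) : 4 ≤ P.k t := by
  by_contra! hk
  have : P.k t * a t ≤ 3 * a t := Nat.mul_le_mul_right _ (by omega)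
  have := P.weight_eq t
  have := P.five_mul_weight_E_le hd t
  have := ha t
  have := hd t
  omega

lemma sub_one_mul_add_add_weight_E (ha : ∀ i, 0 < a i) (hd : ∀ i, 5 * a i ≤ d) (t : σ) :
    (P.k t - 1) * a t + a t + weight a (P.E t) = d := by
  refine Eq.trans ?_ (P.weight_eq t)
  rw [← Nat.succ_mul, Nat.succ_eq_add_one,
    Nat.sub_add_cancel (by have := P.four_le_k ha hd t; omega)]

lemma divisor_apply_self (t : σ) : P.divisor t t = P.k t - 1 := by
  simp [divisor, E_apply_self]

lemma divisor_apply_of_ne {t x : σ} (h : x ≠ t) : P.divisor t x = P.E t x := by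
  simp [divisor, single_eq_of_ne' h.symm]

lemma divisor_le_lift (p : σ × (σ →₀ ℕ)) : P.divisor p.1 ≤ P.lift p := le_self_add

lemma monomialChar_divisor_mul (ha : ∀ i, 0 < a i) (hd : ∀ i, 5 * a i ≤ d) (t : σ) :
    monomialChar c (P.divisor t) * c t = c₀ := by
  refine Eq.trans ?_ (P.monomialChar_eq t)
  rw [divisor, monomialChar_add, monomialChar_single,
    mul_right_comm, ← pow_succ, Nat.sub_add_cancel (by have := P.four_le_k ha hd t; omega)]

lemma lift_mem (ha : ∀ i, 0 < a i) (hd : ∀ i, 5 * a i ≤ d) {p : σ × (σ →₀ ℕ)}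
    (hp : p ∈ nonEigenPairs a c) : P.lift p ∈ nonEigenMonomials a d c c₀ := by
  obtain ⟨t, y⟩ := p
  obtain ⟨hy, hyc⟩ := hp
  refine ⟨?_, fun h => hyc ?_⟩
  · simp only [lift, divisor, map_add, weight_single, smul_eq_mul] at hy ⊢
    have := P.sub_one_mul_add_add_weight_E ha hd t
    omega
  · rw [lift, monomialChar_add] at h
    exact mul_left_cancel (h.trans (P.monomialChar_divisor_mul ha hd t).symm)

/-- The `t`-exponent of `lift (t, y)` has weight at least `3 d / 5`, more than `E t'` and `y'`
can provide when `t' ≠ t`. -/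
lemma lift_injOn (ha : ∀ i, 0 < a i) (hd : ∀ i, 5 * a i ≤ d) :
    Set.InjOn P.lift (nonEigenPairs a c) := by
  rintro ⟨t, y⟩ - ⟨t', y'⟩ ⟨hy', -⟩ heq
  obtain rfl | htt := eq_or_ne t t'
  · simpa [lift] using heq
  · exfalso
    have hcoord := DFunLike.congr_fun heq t
    simp only [lift, Finsupp.coe_add, Pi.add_apply, P.divisor_apply_self,
      P.divisor_apply_of_ne htt] at hcoord
    have h1 : (P.k t - 1) * a t ≤ (P.E t' t + y' t) * a t := Nat.mul_le_mul_right _ (by omega)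
    have h2 : P.E t' t * a t ≤ a t := by
      simpa using Nat.mul_le_mul_right (a t) (P.E_apply_le_one t' t)
    have h3 := apply_mul_le_weight a y' t
    have := P.sub_one_mul_add_add_weight_E ha hd t
    have := P.five_mul_weight_E_le hd t
    have := ha t
    have := hd t
    have := hd t'
    simp only at hy'
    rw [add_mul] at h1
    omega

lemma single_k_add_one_mem {t j : σ} (hE : P.E t = single j 1) (haj : a j = a t)
    (hcj : c j ≠ c t) : single t (P.k t + 1) ∈ nonEigenMonomials a d c c₀ := by
  have hw := P.weight_eq t
  have hχ := P.monomialChar_eq t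
  rw [hE, weight_single, smul_eq_mul, one_mul, haj] at hw
  rw [hE, monomialChar_single, pow_one] at hχ
  refine ⟨by rw [weight_single, smul_eq_mul, add_mul, one_mul, hw], fun h => hcj ?_⟩
  rw [monomialChar_single, pow_succ] at h
  exact (mul_left_cancel (h.trans hχ.symm)).symm

lemma not_divisor_le_single_k_add_one (ha : ∀ i, 0 < a i) (hd : ∀ i, 5 * a i ≤ d)
    {t j : σ} (hE : P.E t = single j 1) (w : σ) : ¬ P.divisor w ≤ single t (P.k t + 1) := by
  intro hle
  obtain rfl | hwt := eq_or_ne w t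
  · have hjw : j ≠ w := by rintro rfl; simpa [hE] using P.E_apply_self j
    simpa [P.divisor_apply_of_ne hjw, hE, single_eq_of_ne' hjw.symm] using hle j
  · have := P.four_le_k ha hd w
    have := hle w
    rw [P.divisor_apply_self, single_eq_of_ne' hwt.symm] at this
    omega

def twist (i : σ) (s : ℕ) (y : σ →₀ ℕ) : σ →₀ ℕ := single i (P.k i - s) + s • y + P.E i

lemma twist_mem {i : σ} {s : ℕ} {y : σ →₀ ℕ} (hs : s ≤ P.k i) (hy : weight a y = a i)
    (hr : (monomialChar c y / c i) ^ s ≠ 1) : P.twist i s y ∈ nonEigenMonomials a d c c₀ := by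
  refine ⟨?_, fun h => hr ?_⟩
  · rw [twist, map_add, map_add, weight_single, map_nsmul, hy, smul_eq_mul, smul_eq_mul,
      ← add_mul, Nat.sub_add_cancel hs]
    exact P.weight_eq i
  · have h' := h.trans (P.monomialChar_eq i).symm
    rw [twist, monomialChar_add, monomialChar_add, monomialChar_single, monomialChar_nsmul,
      ← pow_sub_mul_pow (c i) hs] at h'
    rw [div_pow, div_eq_one]
    exact mul_left_cancel (mul_right_cancel h')

lemma twist_apply_self {i : σ} {s : ℕ} {y : σ →₀ ℕ} (hy : y i = 0) :
    P.twist i s y i = P.k i - s := by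
  simp [twist, hy, E_apply_self]

lemma twist_apply_of_ne {i x : σ} {s : ℕ} {y : σ →₀ ℕ} (h : x ≠ i) :
    P.twist i s y x = s * y x + P.E i x := by
  simp [twist, single_eq_of_ne' h.symm]

lemma k_sub_one_le_of_divisor_le_twist {i w : σ} {s : ℕ} {y : σ →₀ ℕ} (hwi : w ≠ i)
    (hle : P.divisor w ≤ P.twist i s y) : P.k w - 1 ≤ s * y w + P.E i w := by
  simpa [P.divisor_apply_self, P.twist_apply_of_ne hwi] using hle w

lemma sub_one_mul_le_of_divisor_le_twist {i w : σ} {s : ℕ} {y : σ →₀ ℕ} (hwi : w ≠ i)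
    (hle : P.divisor w ≤ P.twist i s y) :
    (P.k w - 1) * a w ≤ s * (y w * a w) + P.E i w * a w :=
  calc (P.k w - 1) * a w ≤ (s * y w + P.E i w) * a w :=
        Nat.mul_le_mul_right _ (P.k_sub_one_le_of_divisor_le_twist hwi hle)
    _ = s * (y w * a w) + P.E i w * a w := by ring

lemma monomialChar_eq_of_E_apply_ne_zero (ha : ∀ i, 0 < a i)
    (H : ∀ t j, P.E t = single j 1 → a j = a t → c j = c t) {i w : σ} {y : σ →₀ ℕ}
    (hy : weight a y = a i) (hyw : y w ≠ 0) (hE : P.E i w ≠ 0) (haw : a i ≤ a w) :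
    monomialChar c y = c i := by
  have hy1 := eq_single_one_of_weight_le ha (hy.trans_le haw) hyw
  have haw' := le_weight_of_ne_zero' a hyw
  rw [hy1, monomialChar_single, pow_one]
  exact H i w (P.E_eq_single_of_apply_ne_zero hE) (by omega)

lemma monomialChar_eq_of_divisor_le_twist_two (ha : ∀ i, 0 < a i) (hd : ∀ i, 5 * a i ≤ d)
    (H : ∀ t j, P.E t = single j 1 → a j = a t → c j = c t) {i w : σ} {y : σ →₀ ℕ}
    (hy : weight a y = a i) (hwi : w ≠ i) (hle : P.divisor w ≤ P.twist i 2 y) :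
    monomialChar c y = c i := by
  have hcoord := P.k_sub_one_le_of_divisor_le_twist hwi hle
  have hmul := P.sub_one_mul_le_of_divisor_le_twist hwi hle
  have hk := P.four_le_k ha hd w
  have hE := P.E_apply_le_one i w
  have hyw : y w ≠ 0 := by intro h0; rw [h0] at hcoord; omega
  have := apply_mul_le_weight a y w
  have := P.sub_one_mul_add_add_weight_E ha hd w
  have := P.five_mul_weight_E_le hd w
  have := hd i
  have := hd w
  have := ha w
  obtain hE0 | hE1 := Nat.le_one_iff_eq_zero_or_eq_one.mp hE
  · rw [hE0] at hmul
    omega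
  · rw [hE1] at hmul
    exact P.monomialChar_eq_of_E_apply_ne_zero ha H hy hyw (by omega) (by omega)

/-- Here the weights balance only if `a i = 2 a w` and `k i * a i + a w = 5 a i`, i.e.
`(2 k i + 1) a w = 10 a w`, which is impossible by parity. -/
lemma not_divisor_le_twist_three_of_two_le (ha : ∀ i, 0 < a i) (hd : ∀ i, 5 * a i ≤ d)
    {i w : σ} {y : σ →₀ ℕ} (hy : weight a y = a i) (hwi : w ≠ i) (hyw : 2 ≤ y w) :
    ¬ P.divisor w ≤ P.twist i 3 y := by
  intro hle
  have hmul := P.sub_one_mul_le_of_divisor_le_twist hwi hle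
  have h2 : 2 * a w ≤ y w * a w := Nat.mul_le_mul_right _ hyw
  have := apply_mul_le_weight a y w
  have := P.sub_one_mul_add_add_weight_E ha hd w
  have := P.five_mul_weight_E_le hd w
  have := hd i
  have := ha w
  obtain hE0 | hE1 := Nat.le_one_iff_eq_zero_or_eq_one.mp (P.E_apply_le_one i w)
  · rw [hE0] at hmul
    omega
  · rw [hE1] at hmul
    have hai : a i = 2 * a w := by omega
    have hwi' := P.weight_eq i
    rw [P.E_eq_single_of_apply_ne_zero (t := i) (x := w) (by omega), weight_single,
      smul_eq_mul, one_mul] at hwi'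
    have hd10 : d = 10 * a w := by omega
    have hparity : (2 * P.k i + 1) * a w = 10 * a w := by
      rw [hai] at hwi'
      linarith
    have := Nat.eq_of_mul_eq_mul_right (ha w) hparity
    omega

lemma monomialChar_eq_of_divisor_le_twist_three_of_k_eq_four (ha : ∀ i, 0 < a i)
    (hd : ∀ i, 5 * a i ≤ d) (H : ∀ t j, P.E t = single j 1 → a j = a t → c j = c t)
    {i w : σ} {y : σ →₀ ℕ} (hy : weight a y = a i) (hyw : y w = 1)
    (hk : P.k w = 4) (hle : P.divisor w ≤ P.twist i 3 y) : monomialChar c y = c i := by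
  have hww := P.weight_eq w
  rw [hk] at hww
  have := P.five_mul_weight_E_le hd w
  have := hd w
  have := hd i
  have := ha w
  have haw := le_weight_of_ne_zero' a (s := w) (f := y) (by omega)
  have hy1 : y = single w 1 := eq_single_one_of_weight_le ha (by omega) (by omega)
  obtain hE0 | ⟨j, hjw, hEw⟩ := P.E_eq w
  · rw [hE0, map_zero] at hww
    omega
  rw [hEw, weight_single, smul_eq_mul, one_mul] at hww
  have := hd j
  have hcj : c j = c w := H w j hEw (by omega)
  have hcoord := hle j
  rw [P.divisor_apply_of_ne hjw, hEw, single_eq_same] at hcoord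
  have hcji : c j = c i := by
    by_cases hji : j = i
    · rw [hji]
    · rw [P.twist_apply_of_ne hji, hy1, single_eq_of_ne hjw] at hcoord
      exact H i j (P.E_eq_single_of_apply_ne_zero (by omega)) (by omega)
  rw [hy1, monomialChar_single, pow_one, ← hcj, hcji]

lemma monomialChar_eq_of_divisor_le_twist_three_of_k_eq_five (ha : ∀ i, 0 < a i)
    (hd : ∀ i, 5 * a i ≤ d) (H : ∀ t j, P.E t = single j 1 → a j = a t → c j = c t)
    {i w : σ} {y : σ →₀ ℕ} (hy : weight a y = a i) (hyw : y w = 1)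
    (hk : P.k w = 5) (hEiw : P.E i w = 1) (hle : P.divisor w ≤ P.twist i 3 y) :
    monomialChar c y = c i := by
  classical
  refine P.monomialChar_eq_of_E_apply_ne_zero (w := w) ha H hy (by omega) (by omega) ?_
  have hEi := P.E_eq_single_of_apply_ne_zero (t := i) (x := w) (by omega)
  have hwi' := P.weight_eq i
  rw [hEi, weight_single, smul_eq_mul, one_mul] at hwi'
  have hww := P.weight_eq w
  rw [hk] at hww
  have := hd i
  obtain hE0 | ⟨j, hjw, hEw⟩ := P.E_eq w
  · rw [hE0, map_zero] at hww
    omega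
  rw [hEw, weight_single, smul_eq_mul, one_mul] at hww
  have hcoord := hle j
  rw [P.divisor_apply_of_ne hjw, hEw, single_eq_same] at hcoord
  by_cases hji : j = i
  · rw [hji] at hww
    obtain hk4 | hk5 := (P.four_le_k ha hd i).eq_or_lt
    · rw [← hk4] at hwi'
      omega
    · have : 5 * a i ≤ P.k i * a i := Nat.mul_le_mul_right _ hk5
      omega
  · rw [P.twist_apply_of_ne hji, hEi, single_eq_of_ne hjw] at hcoord
    have hpair := sum_apply_mul_le_weight a y {w, j}
    rw [Finset.sum_pair hjw.symm, hyw, hy] at hpair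
    have : a j ≤ y j * a j := Nat.le_mul_of_pos_left _ (by omega)
    omega

lemma monomialChar_eq_of_divisor_le_twist_three (ha : ∀ i, 0 < a i) (hd : ∀ i, 5 * a i ≤ d)
    (H : ∀ t j, P.E t = single j 1 → a j = a t → c j = c t) {i w : σ} {y : σ →₀ ℕ}
    (hy : weight a y = a i) (hwi : w ≠ i) (hle : P.divisor w ≤ P.twist i 3 y) :
    monomialChar c y = c i := by
  have hcoord := P.k_sub_one_le_of_divisor_le_twist hwi hle
  have := P.four_le_k ha hd w
  have := P.E_apply_le_one i w
  obtain hyw | hyw : 2 ≤ y w ∨ y w = 1 := by omega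
  · exact (P.not_divisor_le_twist_three_of_two_le ha hd hy hwi hyw hle).elim
  · obtain hk | ⟨hk, hEiw⟩ : P.k w = 4 ∨ P.k w = 5 ∧ P.E i w = 1 := by omega
    · exact P.monomialChar_eq_of_divisor_le_twist_three_of_k_eq_four ha hd H hy hyw hk hle
    · exact P.monomialChar_eq_of_divisor_le_twist_three_of_k_eq_five ha hd H hy hyw hk hEiw
        hle

lemma exists_twist_forall_not_divisor_le (ha : ∀ i, 0 < a i) (hd : ∀ i, 5 * a i ≤ d)
    (H : ∀ t j, P.E t = single j 1 → a j = a t → c j = c t) {p : σ × (σ →₀ ℕ)}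
    (hp : p ∈ nonEigenPairs a c) :
    ∃ m ∈ nonEigenMonomials a d c c₀, ∀ w, ¬ P.divisor w ≤ m := by
  obtain ⟨i, y⟩ := p
  obtain ⟨hy, hyc⟩ := hp
  have hyi : y i = 0 := by
    by_contra hyi
    refine hyc ?_
    rw [eq_single_one_of_weight_le ha hy.le hyi, monomialChar_single, pow_one]
  have hr : monomialChar c y / c i ≠ 1 := fun h => hyc (div_eq_one.mp h)
  obtain ⟨s, hs, hrs⟩ : ∃ s, (s = 2 ∨ s = 3) ∧ (monomialChar c y / c i) ^ s ≠ 1 := by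
    by_cases hr2 : (monomialChar c y / c i) ^ 2 = 1
    · exact ⟨3, .inr rfl, by rwa [pow_succ, hr2, one_mul]⟩
    · exact ⟨2, .inl rfl, hr2⟩
  have hk := P.four_le_k ha hd i
  refine ⟨P.twist i s y, P.twist_mem (by omega) hy hrs, fun w hle => ?_⟩
  by_cases hwi : w = i
  · rw [hwi] at hle
    have hcoord := hle i
    rw [P.divisor_apply_self, P.twist_apply_self hyi] at hcoord
    omega
  · obtain rfl | rfl := hs
    · exact hyc (P.monomialChar_eq_of_divisor_le_twist_two ha hd H hy hwi hle)
    · exact hyc (P.monomialChar_eq_of_divisor_le_twist_three ha hd H hy hwi hle)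

lemma exists_nonEigenMonomial_forall_not_divisor_le (ha : ∀ i, 0 < a i)
    (hd : ∀ i, 5 * a i ≤ d) (hΓ : (nonEigenPairs a c).Nonempty) :
    ∃ m ∈ nonEigenMonomials a d c c₀, ∀ w, ¬ P.divisor w ≤ m := by
  by_cases H : ∀ t j, P.E t = single j 1 → a j = a t → c j = c t
  · exact P.exists_twist_forall_not_divisor_le ha hd H hΓ.some_mem
  · push Not at H
    obtain ⟨t, j, hE, haj, hcj⟩ := H
    exact ⟨_, P.single_k_add_one_mem hE haj hcj, P.not_divisor_le_single_k_add_one ha hd hE⟩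

end PivotSystem

theorem PivotSystem.ncard_nonEigenPairs_lt [Finite σ] {a : σ → ℕ} {d : ℕ} {c : σ → G} {c₀ : G}
    (P : PivotSystem a d c c₀) (ha : ∀ i, 0 < a i) (hd : ∀ i, 5 * a i ≤ d)
    (hΓ : (nonEigenPairs a c).Nonempty) :
    (nonEigenPairs a c).ncard < (nonEigenMonomials a d c c₀).ncard := by
  obtain ⟨m, hm, hfree⟩ := P.exists_nonEigenMonomial_forall_not_divisor_le ha hd hΓ
  have hfin : (nonEigenMonomials a d c c₀).Finite :=
    (finite_of_nat_weight_le a (fun i => (ha i).ne') d).subset fun m hm => hm.1.le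
  have hsub : insert m (P.lift '' nonEigenPairs a c) ⊆ nonEigenMonomials a d c c₀ :=
    Set.insert_subset hm (Set.image_subset_iff.mpr fun _ hp => P.lift_mem ha hd hp)
  have hm_notMem : m ∉ P.lift '' nonEigenPairs a c := by
    rintro ⟨p, -, rfl⟩
    exact hfree p.1 (P.divisor_le_lift p)
  calc (nonEigenPairs a c).ncard = (P.lift '' nonEigenPairs a c).ncard :=
        (P.lift_injOn ha hd).ncard_image.symm
    _ < (insert m (P.lift '' nonEigenPairs a c)).ncard := by
        rw [Set.ncard_insert_of_notMem hm_notMem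
          (hfin.subset ((Set.subset_insert _ _).trans hsub))]
        exact Nat.lt_succ_self _
    _ ≤ (nonEigenMonomials a d c c₀).ncard := Set.ncard_le_ncard hsub hfin

end PivotSystem

section Quasismooth

lemma MvPolynomial.exists_coeff_single_ne_zero_of_eval_ne_zero {σ R : Type*} [CommSemiring R]
    [DecidableEq σ] {f : MvPolynomial σ R} {t : σ} (h : eval (Pi.single t 1) f ≠ 0) :
    ∃ k, coeff (single t k) f ≠ 0 := by
  by_contra! hcoeff
  refine h ((eval_eq _ f).trans (Finset.sum_eq_zero fun m _ => ?_))
  by_cases hm : m = single t (m t)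
  · rw [hm, hcoeff, zero_mul]
  · obtain ⟨w, hw⟩ := DFunLike.ne_iff.mp hm
    have hwt : w ≠ t := by rintro rfl; simp at hw
    rw [single_eq_of_ne hwt] at hw
    refine mul_eq_zero_of_right _ (Finset.prod_eq_zero (Finsupp.mem_support_iff.mpr hw) ?_)
    rw [Pi.single_eq_of_ne hwt, zero_pow hw]

/-- At the coordinate point `e_t`, quasismoothness yields a monomial `x_t ^ k * E` of `f` with
`E = 1` (if `f(e_t) ≠ 0`) or `E = x_j`, `j ≠ t` (if `∂f/∂x_j (e_t) ≠ 0`). -/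
lemma Quasismooth.exists_coeff_ne_zero {n : ℕ} {f : MvPolynomial (Fin (n + 2)) ℂ}
    (hq : Quasismooth f) (t : Fin (n + 2)) :
    ∃ (k : ℕ) (E : Fin (n + 2) →₀ ℕ), coeff (single t k + E) f ≠ 0 ∧
      (E = 0 ∨ ∃ j ≠ t, E = single j 1) := by
  by_cases h0 : eval (Pi.single t 1) f = 0
  · obtain ⟨j, hj⟩ := hq _ (by simp) h0
    obtain ⟨k, hk⟩ := exists_coeff_single_ne_zero_of_eval_ne_zero hj
    rw [coeff_pderiv] at hk
    by_cases hjt : j = t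
    · subst hjt
      exact ⟨k + 1, 0, by simpa [single_add] using left_ne_zero_of_mul hk, .inl rfl⟩
    · exact ⟨k, single j 1, left_ne_zero_of_mul hk, .inr ⟨j, hjt, rfl⟩⟩
  · obtain ⟨k, hk⟩ := exists_coeff_single_ne_zero_of_eval_ne_zero h0
    exact ⟨k, 0, by simpa using hk, .inl rfl⟩

lemma Quasismooth.nonempty_pivotSystem {n : ℕ} {a : Fin (n + 2) → ℕ} {d : ℕ}
    {f : MvPolynomial (Fin (n + 2)) ℂ} (hq : Quasismooth f) (hfh : f.IsWeightedHomogeneous a d)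
    {c : Fin (n + 2) → ℂˣ} {c₀ : ℂˣ} (hβ : aeval (fun i => (c i : ℂ) • X i) f = (c₀ : ℂ) • f) :
    Nonempty (PivotSystem a d c c₀) := by
  choose k E hcoeff hE using hq.exists_coeff_ne_zero
  refine ⟨⟨k, E, hE, fun t => ?_, fun t => ?_⟩⟩
  · simpa [weight_single] using hfh (hcoeff t)
  · simpa [monomialChar_add] using monomialChar_units_eq_of_coeff_ne_zero hβ (hcoeff t)

end Quasismooth

theorem vanishing_monomials_count_general {n : ℕ} (a : Fin (n + 2) → ℕ) (ha : ∀ i, 0 < a i)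
    (d : ℕ) (hd : 5 * Finset.univ.sup a ≤ d)
    (f : MvPolynomial (Fin (n + 2)) ℂ)
    (hfh : f.IsWeightedHomogeneous a d) (hq : Quasismooth f)
    (c : Fin (n + 2) → ℂˣ) (c₀ : ℂˣ)
    (hβ : aeval (fun i => ((c i : ℂ)) • (X i : MvPolynomial (Fin (n + 2)) ℂ)) f
      = (c₀ : ℂ) • f)
    (hΓ : {p : Fin (n + 2) × ((Fin (n + 2)) →₀ ℕ) |
        (Finsupp.weight a) p.2 = a p.1 ∧
          (p.2.prod fun j e => (c j : ℂ) ^ e) ≠ (c p.1 : ℂ)}.Nonempty) :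
    {p : Fin (n + 2) × ((Fin (n + 2)) →₀ ℕ) |
        (Finsupp.weight a) p.2 = a p.1 ∧
          (p.2.prod fun j e => (c j : ℂ) ^ e) ≠ (c p.1 : ℂ)}.ncard + 1 ≤
      {m : (Fin (n + 2)) →₀ ℕ | (Finsupp.weight a) m = d ∧ coeff m f = 0}.ncard := by
  have hd' : ∀ i, 5 * a i ≤ d := fun i =>
    (Nat.mul_le_mul_left 5 (Finset.le_sup (Finset.mem_univ i))).trans hd
  have hΓ_eq : {p : Fin (n + 2) × ((Fin (n + 2)) →₀ ℕ) | (Finsupp.weight a) p.2 = a p.1 ∧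
      (p.2.prod fun j e => (c j : ℂ) ^ e) ≠ (c p.1 : ℂ)} = nonEigenPairs a c := by
    ext p
    simp [nonEigenPairs, nonEigenMonomials, Units.ext_iff, monomialChar]
  have hsub : nonEigenMonomials a d c c₀ ⊆
      {m | (Finsupp.weight a) m = d ∧ coeff m f = 0} := fun m ⟨hw, hχ⟩ =>
    ⟨hw, by_contra fun hm => hχ (monomialChar_units_eq_of_coeff_ne_zero hβ hm)⟩
  have hfin : {m | (Finsupp.weight a) m = d ∧ coeff m f = 0}.Finite :=
    (finite_of_nat_weight_le a (fun i => (ha i).ne') d).subset fun m hm => hm.1.le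
  obtain ⟨P⟩ := hq.nonempty_pivotSystem hfh hβ
  rw [hΓ_eq] at hΓ ⊢
  exact (P.ncard_nonEigenPairs_lt ha hd' hΓ).trans_le (Set.ncard_le_ncard hsub hfin)

/-- Let `d ≥ 5·max aᵢ` and let `f` be a nonzero quasismooth
weighted-homogeneous polynomial of degree `d` admitting the diagonal graded automorphism
`β : x_i ↦ c_i·x_i` with `β(f) = c₀·f`. Let `Γ` be the set of pairs `(i, y)` of an index `i`
and (the exponent vector of) a monomial `y` of weighted degree `a i` with `β(y) ≠ c_i·y`.
If `Γ ≠ ∅`, then the number of monomials of weighted degree `d` with vanishing coefficient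
in `f` is at least `|Γ| + 1`. -/
theorem vanishing_monomials_count {n : ℕ} (a : Fin (n + 2) → ℕ) (ha : ∀ i, 0 < a i)
    (d : ℕ) (hd : 5 * Finset.univ.sup a ≤ d)
    (f : MvPolynomial (Fin (n + 2)) ℂ) (hf0 : f ≠ 0)
    (hfh : f.IsWeightedHomogeneous a d) (hq : Quasismooth f)
    (c : Fin (n + 2) → ℂˣ) (c₀ : ℂˣ)
    (hβ : aeval (fun i => ((c i : ℂ)) • (X i : MvPolynomial (Fin (n + 2)) ℂ)) f
      = (c₀ : ℂ) • f)
    (hΓ : {p : Fin (n + 2) × ((Fin (n + 2)) →₀ ℕ) |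
        (Finsupp.weight a) p.2 = a p.1 ∧
          (p.2.prod fun j e => (c j : ℂ) ^ e) ≠ (c p.1 : ℂ)}.Nonempty) :
    {p : Fin (n + 2) × ((Fin (n + 2)) →₀ ℕ) |
        (Finsupp.weight a) p.2 = a p.1 ∧
          (p.2.prod fun j e => (c j : ℂ) ^ e) ≠ (c p.1 : ℂ)}.ncard + 1 ≤
      {m : (Fin (n + 2)) →₀ ℕ | (Finsupp.weight a) m = d ∧ coeff m f = 0}.ncard :=
  vanishing_monomials_count_general a ha d hd f hfh hq c c₀ hβ hΓ

end
end
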